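/- arXiv:2605.13687 — 2 statements merged into one kernel-verified Lean document; each statement's English description precedes it below -/
import Mathlib

section
/- In the autoregressive Ising broadcast process with context depth w on T(d,h), for all indices i < j < k < ℓ the block sums satisfy E[Z_i Z_j Z_k Z_ℓ] = α²·(α·q_w)^{(ℓ−k)+(j−i)−2}·(dρ)^{4w}. -/
open Finset

noncomputable section

/-- A configuration of the rooted `d`-ary tree of height `h` with values in `S`:
a vertex at level `ℓ ≤ h` is a path from the root, i.e. a function `Fin ℓ → Fin d`,
and the configuration assigns an element of `S` to every vertex. -/
abbrev TreeConfig (d h : ℕ) (S : Type) := ∀ ℓ : Fin (h + 1), (Fin ℓ.val → Fin d) → S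

/-- The value at the root of the tree. -/
def rootOf {d h : ℕ} {S : Type} (σ : TreeConfig d h S) : S :=
  σ ⟨0, Nat.succ_pos h⟩ Fin.elim0

/-- The values at the leaves (level `h`) of the tree, read as a function on root-to-leaf paths. -/
def leavesOf {d h : ℕ} {S : Type} (σ : TreeConfig d h S) : (Fin h → Fin d) → S :=
  σ ⟨h, Nat.lt_succ_self h⟩

/-- Product over all edges of the tree of an edge weight `W (parent value) (child value)`. -/
def edgeProd {S : Type} (d h : ℕ) (W : S → S → ℝ) (σ : TreeConfig d h S) : ℝ :=
  ∏ ℓ : Fin h, ∏ f : Fin (ℓ.val + 1) → Fin d,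
    W (σ ⟨ℓ.val, Nat.lt_succ_of_lt ℓ.isLt⟩ fun i => f i.castSucc)
      (σ ⟨ℓ.val + 1, Nat.succ_lt_succ ℓ.isLt⟩ f)

/-- Probability of a full configuration under the broadcast process with root prior `ν`
and broadcast channel `W`. -/
def broadcastW {S : Type} (d h : ℕ) (ν : S → ℝ) (W : S → S → ℝ) (σ : TreeConfig d h S) : ℝ :=
  ν (rootOf σ) * edgeProd d h W σ

/-- The real spin value `±1` of a Boolean spin. -/
def spinVal (b : Bool) : ℝ := if b then 1 else -1

/-- The Ising broadcast channel: copy the parent spin with probability `(1+ρ)/2`. -/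
def isingEdge (ρ : ℝ) (a b : Bool) : ℝ := if a = b then (1 + ρ) / 2 else (1 - ρ) / 2

/-- Probability of a configuration under the Ising broadcast process with uniform root. -/
def isingW (d h : ℕ) (ρ : ℝ) (σ : TreeConfig d h Bool) : ℝ :=
  broadcastW d h (fun _ => (1 : ℝ) / 2) (isingEdge ρ) σ

/-- Probability of a configuration under the Ising broadcast process with the root
conditioned to equal `r`. -/
def isingWRooted (d h : ℕ) (ρ : ℝ) (r : Bool) (σ : TreeConfig d h Bool) : ℝ :=
  (if rootOf σ = r then 1 else 0) * edgeProd d h (isingEdge ρ) σ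

/-- The sum of the `d^h` leaf spins of a configuration. -/
def leafSum (d h : ℕ) (σ : TreeConfig d h Bool) : ℝ :=
  ∑ f : Fin h → Fin d, spinVal (leavesOf σ f)

/-- Expectation of a function of the configuration under the Ising broadcast process. -/
def isingExp (d h : ℕ) (ρ : ℝ) (g : TreeConfig d h Bool → ℝ) : ℝ :=
  ∑ σ : TreeConfig d h Bool, isingW d h ρ σ * g σ

/-- `M_{d,ρ,h}(k) = E[(Σ_ℓ X_ℓ)^k | X_root = +1]`. -/
def isingMoment (d h : ℕ) (ρ : ℝ) (k : ℕ) : ℝ :=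
  ∑ σ : TreeConfig d h Bool, isingWRooted d h ρ true σ * leafSum d h σ ^ k

/-- Variance of the sum of the leaf spins under the (true) Ising broadcast process. -/
def isingVar (d h : ℕ) (ρ : ℝ) : ℝ :=
  isingExp d h ρ (fun σ => leafSum d h σ ^ 2) - isingExp d h ρ (leafSum d h) ^ 2

/-- Marginal probability of a leaf spin assignment under the Ising broadcast process. -/
def leafW (d w : ℕ) (ρ : ℝ) (y : (Fin w → Fin d) → Bool) : ℝ :=
  ∑ σ : TreeConfig d w Bool, if leavesOf σ = y then isingW d w ρ σ else 0

/-- Marginal probability of a leaf spin assignment given the root equals `r`. -/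
def leafWRooted (d w : ℕ) (ρ : ℝ) (r : Bool) (y : (Fin w → Fin d) → Bool) : ℝ :=
  ∑ σ : TreeConfig d w Bool, if leavesOf σ = y then isingWRooted d w ρ r σ else 0

/-- Posterior mean `E[X_root | X_leaves = y]` of the root spin given the leaves. -/
def rootPostMean (d w : ℕ) (ρ : ℝ) (y : (Fin w → Fin d) → Bool) : ℝ :=
  (∑ σ : TreeConfig d w Bool,
      if leavesOf σ = y then isingW d w ρ σ * spinVal (rootOf σ) else 0) / leafW d w ρ y

/-- `q_w = E[E[X_root | X_leaves]^2]` for the Ising broadcast process on `T(d,w)`. -/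
def qIsing (d w : ℕ) (ρ : ℝ) : ℝ :=
  ∑ y : (Fin w → Fin d) → Bool, leafW d w ρ y * rootPostMean d w ρ y ^ 2

/-- The law `D_m` of the height of the least common ancestor of a uniformly random
adjacent pair of depth-`w` subtrees: `P(D_m = s) = (d-1) d^{m-s} / (d^m - 1)` for `1 ≤ s ≤ m`. -/
def lcaLaw (d m : ℕ) (s : ℕ) : ℝ :=
  if 1 ≤ s ∧ s ≤ m then ((d : ℝ) - 1) * (d : ℝ) ^ (m - s) / ((d : ℝ) ^ m - 1) else 0

/-- `α = E_{s ∼ D_m}[ρ^{2s}]`. -/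
def alphaAR (d m : ℕ) (ρ : ℝ) : ℝ := ∑ s ∈ Finset.Icc 1 m, lcaLaw d m s * ρ ^ (2 * s)

/-- Joint law of the two subtree root spins when their least common ancestor is at
height `s` above them: a pair of uniform `±1` spins with correlation `ρ^{2s}`. -/
def pairRootW (ρ : ℝ) (s : ℕ) (r r' : Bool) : ℝ :=
  (1 + spinVal r * spinVal r' * ρ ^ (2 * s)) / 4

/-- One-step transition of the autoregressive Ising broadcast process: the conditional law
of the next block of `d^w` leaves given that the previous block equals `y`, averaged over a
least common ancestor height `s ∼ D_m`. -/
def arStep (d w m : ℕ) (ρ : ℝ) (y y' : (Fin w → Fin d) → Bool) : ℝ :=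
  ∑ s ∈ Finset.Icc 1 m, lcaLaw d m s *
    ((∑ r : Bool, ∑ r' : Bool,
        pairRootW ρ s r r' * leafWRooted d w ρ r y * leafWRooted d w ρ r' y') / leafW d w ρ y)

/-- Joint probability of the blocks `Y 0, …, Y (n-1)` of the autoregressive Ising
broadcast process with context depth `w`. -/
def arWeight (d w m n : ℕ) (ρ : ℝ) (Y : Fin n → ((Fin w → Fin d) → Bool)) : ℝ :=
  (if hn : 0 < n then leafW d w ρ (Y ⟨0, hn⟩) else 1) *
    ∏ i : Fin (n - 1),
      arStep d w m ρ (Y ⟨i.val, by have := i.isLt; omega⟩)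
        (Y ⟨i.val + 1, by have := i.isLt; omega⟩)

/-- Expectation of a function of the blocks under the autoregressive Ising broadcast process. -/
def arExp (d w m n : ℕ) (ρ : ℝ) (g : (Fin n → ((Fin w → Fin d) → Bool)) → ℝ) : ℝ :=
  ∑ Y : Fin n → ((Fin w → Fin d) → Bool), arWeight d w m n ρ Y * g Y

/-- The block sum `Z_i = Σ_ℓ (Y_i)_ℓ`. -/
def blockSum (d w : ℕ) (y : (Fin w → Fin d) → Bool) : ℝ :=
  ∑ f : Fin w → Fin d, spinVal (y f)

/-- The total sum `Σ_i Z_i` of all `d^h` generated spins. -/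
def arTotal (d w n : ℕ) (Y : Fin n → ((Fin w → Fin d) → Bool)) : ℝ :=
  ∑ i : Fin n, blockSum d w (Y i)

/-- Variance of the total sum of spins generated by the autoregressive Ising broadcast
process with context depth `w` on `T(d,h)`. -/
def arVar (d h w : ℕ) (ρ : ℝ) : ℝ :=
  arExp d w (h - w) (d ^ (h - w)) ρ (fun Y => arTotal d w (d ^ (h - w)) Y ^ 2)
    - arExp d w (h - w) (d ^ (h - w)) ρ (arTotal d w (d ^ (h - w))) ^ 2

/-- Second moment of the total sum of spins of the autoregressive process. -/
def arSecond (d h w : ℕ) (ρ : ℝ) : ℝ :=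
  arExp d w (h - w) (d ^ (h - w)) ρ (fun Y => arTotal d w (d ^ (h - w)) Y ^ 2)

/-- Fourth moment of the total sum of spins of the autoregressive process. -/
def arFourth (d h w : ℕ) (ρ : ℝ) : ℝ :=
  arExp d w (h - w) (d ^ (h - w)) ρ (fun Y => arTotal d w (d ^ (h - w)) Y ^ 4)

/-- `C_{d,ρ}(2) = (1 - 1/d)·dρ²/(dρ² - 1)`. -/
def C2const (d : ℕ) (ρ : ℝ) : ℝ := (1 - 1 / (d : ℝ)) * ((d : ℝ) * ρ ^ 2) / ((d : ℝ) * ρ ^ 2 - 1)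

/-- `α* = Σ_{s ≥ 1} (1 - 1/d)(1/d)^{s-1} ρ^{2s}`. -/
def alphaStar (d : ℕ) (ρ : ℝ) : ℝ :=
  ∑' s : ℕ, (1 - 1 / (d : ℝ)) * (1 / (d : ℝ)) ^ s * ρ ^ (2 * (s + 1))

/-- `A_{d,ρ}(2) = C_{d,ρ}(2) + 2α*/(1 - α* q*)`. -/
def A2const (d : ℕ) (ρ : ℝ) (qstar : ℝ) : ℝ :=
  C2const d ρ + 2 * alphaStar d ρ / (1 - alphaStar d ρ * qstar)

end
namespace AR

open Finset

noncomputable section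

variable {d : ℕ}

lemma snoc_level_lt {h : ℕ} (τ : TreeConfig d h Bool) (x : (Fin (h + 1) → Fin d) → Bool)
    (j : ℕ) (hj : j < h + 1) (pf : j < h + 2) :
    (Fin.snoc (α := fun ℓ : Fin (h + 1 + 1) => (Fin ℓ.val → Fin d) → Bool) τ x ⟨j, pf⟩)
      = τ ⟨j, hj⟩ :=
  Fin.snoc_castSucc (α := fun ℓ : Fin (h + 1 + 1) => (Fin ℓ.val → Fin d) → Bool)
    (p := τ) (x := x) (i := ⟨j, hj⟩)

lemma snoc_level_last {h : ℕ} (τ : TreeConfig d h Bool) (x : (Fin (h + 1) → Fin d) → Bool)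
    (pf : h + 1 < h + 2) :
    (Fin.snoc (α := fun ℓ : Fin (h + 1 + 1) => (Fin ℓ.val → Fin d) → Bool) τ x ⟨h + 1, pf⟩)
      = x :=
  Fin.snoc_last (α := fun ℓ : Fin (h + 1 + 1) => (Fin ℓ.val → Fin d) → Bool) (p := τ) (x := x)

lemma sum_tc_snoc {h : ℕ} (F : TreeConfig d (h + 1) Bool → ℝ) :
    ∑ σ : TreeConfig d (h + 1) Bool, F σ =
      ∑ τ : TreeConfig d h Bool, ∑ x : (Fin (h + 1) → Fin d) → Bool, F (Fin.snoc τ x) := by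
  rw [← Equiv.sum_comp
      (Fin.snocEquiv (fun ℓ : Fin (h + 1 + 1) => (Fin ℓ.val → Fin d) → Bool)) F,
    Fintype.sum_prod_type]
  rw [Finset.sum_comm]
  rfl

lemma rootOf_snoc {h : ℕ} (τ : TreeConfig d h Bool) (x : (Fin (h + 1) → Fin d) → Bool) :
    rootOf (Fin.snoc τ x : TreeConfig d (h + 1) Bool) = rootOf τ := by
  show (Fin.snoc (α := fun ℓ : Fin (h + 1 + 1) => (Fin ℓ.val → Fin d) → Bool) τ x
      ⟨0, by omega⟩) Fin.elim0 = _
  rw [snoc_level_lt τ x 0 (Nat.succ_pos h)]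
  rfl

lemma leavesOf_snoc {h : ℕ} (τ : TreeConfig d h Bool) (x : (Fin (h + 1) → Fin d) → Bool) :
    leavesOf (Fin.snoc τ x : TreeConfig d (h + 1) Bool) = x := by
  show (Fin.snoc (α := fun ℓ : Fin (h + 1 + 1) => (Fin ℓ.val → Fin d) → Bool) τ x
      ⟨h + 1, by omega⟩) = x
  exact snoc_level_last τ x _

lemma edgeProd_snoc {h : ℕ} (W : Bool → Bool → ℝ) (τ : TreeConfig d h Bool)
    (x : (Fin (h + 1) → Fin d) → Bool) :
    edgeProd d (h + 1) W (Fin.snoc τ x) =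
      edgeProd d h W τ *
        ∏ f : Fin (h + 1) → Fin d,
          W (τ ⟨h, Nat.lt_succ_self h⟩ fun i => f i.castSucc) (x f) := by
  unfold edgeProd
  rw [Fin.prod_univ_castSucc]
  congr 1
  · apply Finset.prod_congr rfl
    intro ℓ _
    show (∏ f : Fin (ℓ.val + 1) → Fin d,
        W ((Fin.snoc (α := fun ℓ : Fin (h + 1 + 1) => (Fin ℓ.val → Fin d) → Bool) τ x
              ⟨ℓ.val, by omega⟩) fun i => f i.castSucc)
          ((Fin.snoc (α := fun ℓ : Fin (h + 1 + 1) => (Fin ℓ.val → Fin d) → Bool) τ x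
              ⟨ℓ.val + 1, by omega⟩) f)) = _
    rw [snoc_level_lt τ x ℓ.val (by omega), snoc_level_lt τ x (ℓ.val + 1) (by omega)]
  · show (∏ f : Fin (h + 1) → Fin d,
        W ((Fin.snoc (α := fun ℓ : Fin (h + 1 + 1) => (Fin ℓ.val → Fin d) → Bool) τ x
              ⟨h, by omega⟩) fun i => f i.castSucc)
          ((Fin.snoc (α := fun ℓ : Fin (h + 1 + 1) => (Fin ℓ.val → Fin d) → Bool) τ x
              ⟨h + 1, by omega⟩) f)) = _
    rw [snoc_level_lt τ x h (by omega), snoc_level_last τ x]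

lemma tc_zero_eq {S : Type} (σ : TreeConfig d 0 S) : σ = fun _ _ => rootOf σ := by
  funext ℓ p
  have hℓ : ℓ = ⟨0, Nat.one_pos⟩ := Fin.ext (by omega)
  subst hℓ
  have hp : p = Fin.elim0 := funext fun i => i.elim0
  subst hp
  rfl

def tcZeroEquiv : TreeConfig d 0 Bool ≃ Bool where
  toFun σ := rootOf σ
  invFun b := fun _ _ => b
  left_inv σ := (tc_zero_eq σ).symm
  right_inv b := rfl

lemma sum_tc_zero (F : TreeConfig d 0 Bool → ℝ) :
    ∑ σ : TreeConfig d 0 Bool, F σ = ∑ b : Bool, F (fun _ _ => b) := by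
  rw [← Equiv.sum_comp (tcZeroEquiv (d := d)).symm F]
  rfl

lemma isingEdge_sum (ρ : ℝ) (a : Bool) : ∑ b : Bool, isingEdge ρ a b = 1 := by
  cases a <;> simp [isingEdge, Fintype.sum_bool] <;> ring

lemma isingEdge_sum_spin (ρ : ℝ) (a : Bool) :
    ∑ b : Bool, isingEdge ρ a b * spinVal b = ρ * spinVal a := by
  cases a <;> simp [isingEdge, spinVal, Fintype.sum_bool] <;> ring

lemma edgeProd_zero {S : Type} (W : S → S → ℝ) (σ : TreeConfig d 0 S) :
    edgeProd d 0 W σ = 1 := by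
  unfold edgeProd
  simp

/-- T1: total mass of the rooted Ising broadcast is 1. -/
lemma sum_isingWRooted (h : ℕ) (ρ : ℝ) (r : Bool) :
    ∑ σ : TreeConfig d h Bool, isingWRooted d h ρ r σ = 1 := by
  induction h with
  | zero =>
      rw [sum_tc_zero]
      unfold isingWRooted
      have hr : ∀ b : Bool, rootOf (fun _ _ => b : TreeConfig d 0 Bool) = b := fun b => rfl
      simp only [hr, edgeProd_zero, mul_one]
      cases r <;> simp
  | succ h ih =>
      rw [sum_tc_snoc]
      have hterm : ∀ τ : TreeConfig d h Bool,
          ∑ x : (Fin (h + 1) → Fin d) → Bool, isingWRooted d (h+1) ρ r (Fin.snoc τ x)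
            = isingWRooted d h ρ r τ := by
        intro τ
        unfold isingWRooted
        simp only [rootOf_snoc, edgeProd_snoc, ← mul_assoc]
        rw [← Finset.mul_sum, ← Fintype.prod_sum
          (f := fun (f : Fin (h + 1) → Fin d) (b : Bool) =>
            isingEdge ρ (τ ⟨h, Nat.lt_succ_self h⟩ fun i => f i.castSucc) b)]
        simp only [isingEdge_sum, Finset.prod_const_one, mul_one]
      simp only [hterm, ih]

end

end AR
namespace AR

open Finset

noncomputable section

variable {d : ℕ}

lemma leafSum_snoc {h : ℕ} (τ : TreeConfig d h Bool) (x : (Fin (h + 1) → Fin d) → Bool) :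
    leafSum d (h + 1) (Fin.snoc τ x) = ∑ f : Fin (h + 1) → Fin d, spinVal (x f) := by
  unfold leafSum
  rw [leavesOf_snoc]

lemma sum_fun_init {h : ℕ} (g : (Fin h → Fin d) → ℝ) :
    ∑ f0 : Fin (h + 1) → Fin d, g (fun i => f0 i.castSucc) =
      (d : ℝ) * ∑ f' : Fin h → Fin d, g f' := by
  rw [← Equiv.sum_comp (Fin.snocEquiv (fun _ : Fin (h + 1) => Fin d))
      (fun f0 => g (fun i => f0 i.castSucc)), Fintype.sum_prod_type]
  have key : ∀ (j : Fin d) (f' : Fin h → Fin d),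
      (fun i : Fin h =>
        (Fin.snocEquiv (fun _ : Fin (h + 1) => Fin d)) (j, f') i.castSucc) = f' := by
    intro j f'
    funext i
    exact Fin.snoc_castSucc (α := fun _ : Fin (h + 1) => Fin d) (p := f') (x := j) (i := i)
  simp only [key]
  rw [Finset.sum_const, Finset.card_univ, Fintype.card_fin, nsmul_eq_mul]

lemma sum_marked {h : ℕ} (ρ : ℝ) (p : (Fin (h + 1) → Fin d) → Bool)
    (f0 : Fin (h + 1) → Fin d) :
    ∑ x : (Fin (h + 1) → Fin d) → Bool,
        (∏ f : Fin (h + 1) → Fin d, isingEdge ρ (p f) (x f)) * spinVal (x f0)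
      = ρ * spinVal (p f0) := by
  have key : ∀ x : (Fin (h + 1) → Fin d) → Bool,
      (∏ f : Fin (h + 1) → Fin d, isingEdge ρ (p f) (x f)) * spinVal (x f0)
        = ∏ f : Fin (h + 1) → Fin d,
            (isingEdge ρ (p f) (x f) * (if f = f0 then spinVal (x f) else 1)) := by
    intro x
    rw [Finset.prod_mul_distrib]
    congr 1
    rw [Finset.prod_ite_eq' Finset.univ f0 (fun f => spinVal (x f))]
    simp
  simp only [key]
  rw [← Fintype.prod_sum
    (f := fun (f : Fin (h + 1) → Fin d) (b : Bool) =>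
      isingEdge ρ (p f) b * (if f = f0 then spinVal b else 1))]
  have inner : ∀ f : Fin (h + 1) → Fin d,
      (∑ b : Bool, isingEdge ρ (p f) b * (if f = f0 then spinVal b else 1))
        = if f = f0 then ρ * spinVal (p f) else 1 := by
    intro f
    by_cases hf : f = f0
    · simp only [hf, if_true, isingEdge_sum_spin]
    · simp only [hf, if_false, mul_one, isingEdge_sum]
  simp only [inner]
  rw [Finset.prod_ite_eq' Finset.univ f0 (fun f => ρ * spinVal (p f))]
  simp

/-- T2: conditional magnetization of the leaf sum. -/
lemma sum_isingWRooted_leafSum (h : ℕ) (ρ : ℝ) (r : Bool) :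
    ∑ σ : TreeConfig d h Bool, isingWRooted d h ρ r σ * leafSum d h σ
      = spinVal r * ((d : ℝ) * ρ) ^ h := by
  induction h with
  | zero =>
      rw [sum_tc_zero]
      have hls : ∀ b : Bool, leafSum d 0 (fun _ _ => b : TreeConfig d 0 Bool) = spinVal b := by
        intro b
        unfold leafSum leavesOf
        simp
      have hr : ∀ b : Bool, rootOf (fun _ _ => b : TreeConfig d 0 Bool) = b := fun b => rfl
      unfold isingWRooted
      simp only [hr, hls, edgeProd_zero, mul_one, pow_zero]
      cases r <;> simp [spinVal]
  | succ h ih =>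
      rw [sum_tc_snoc]
      have hterm : ∀ τ : TreeConfig d h Bool,
          ∑ x : (Fin (h + 1) → Fin d) → Bool,
              isingWRooted d (h + 1) ρ r (Fin.snoc τ x) * leafSum d (h + 1) (Fin.snoc τ x)
            = ((d : ℝ) * ρ) * (isingWRooted d h ρ r τ * leafSum d h τ) := by
        intro τ
        unfold isingWRooted
        simp only [rootOf_snoc, edgeProd_snoc, leafSum_snoc]
        have expand : ∀ x : (Fin (h + 1) → Fin d) → Bool,
            (if rootOf τ = r then (1:ℝ) else 0) *
                (edgeProd d h (isingEdge ρ) τ *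
                  ∏ f : Fin (h + 1) → Fin d,
                    isingEdge ρ (τ ⟨h, Nat.lt_succ_self h⟩ fun i => f i.castSucc) (x f)) *
              (∑ f0 : Fin (h + 1) → Fin d, spinVal (x f0))
            = ∑ f0 : Fin (h + 1) → Fin d,
                (if rootOf τ = r then (1:ℝ) else 0) * edgeProd d h (isingEdge ρ) τ *
                  ((∏ f : Fin (h + 1) → Fin d,
                    isingEdge ρ (τ ⟨h, Nat.lt_succ_self h⟩ fun i => f i.castSucc) (x f))
                    * spinVal (x f0)) := by
          intro x
          rw [Finset.mul_sum]
          exact Finset.sum_congr rfl fun f0 _ => by ring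
        simp only [expand]
        rw [Finset.sum_comm]
        have inner : ∀ f0 : Fin (h + 1) → Fin d,
            (∑ x : (Fin (h + 1) → Fin d) → Bool,
              (if rootOf τ = r then (1:ℝ) else 0) * edgeProd d h (isingEdge ρ) τ *
                ((∏ f : Fin (h + 1) → Fin d,
                  isingEdge ρ (τ ⟨h, Nat.lt_succ_self h⟩ fun i => f i.castSucc) (x f))
                  * spinVal (x f0)))
            = (if rootOf τ = r then (1:ℝ) else 0) * edgeProd d h (isingEdge ρ) τ *
                (ρ * spinVal (τ ⟨h, Nat.lt_succ_self h⟩ fun i => f0 i.castSucc)) := by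
          intro f0
          rw [← Finset.mul_sum]
          congr 1
          exact sum_marked ρ _ f0
        simp only [inner]
        rw [← Finset.mul_sum, ← Finset.mul_sum,
          sum_fun_init (fun f' => spinVal (τ ⟨h, Nat.lt_succ_self h⟩ f'))]
        show _ = ((d:ℝ) * ρ) * ((if rootOf τ = r then (1:ℝ) else 0) * edgeProd d h (isingEdge ρ) τ
          * ∑ f' : Fin h → Fin d, spinVal (τ ⟨h, Nat.lt_succ_self h⟩ f'))
        ring
      simp only [hterm]
      rw [← Finset.mul_sum, ih, pow_succ]
      ring

end

end AR
namespace AR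

open Finset

noncomputable section

variable {d w : ℕ} {ρ : ℝ}

/-- Numerator of the posterior mean. -/
def Nf (d w : ℕ) (ρ : ℝ) (y : (Fin w → Fin d) → Bool) : ℝ :=
  ∑ σ : TreeConfig d w Bool,
    if leavesOf σ = y then isingW d w ρ σ * spinVal (rootOf σ) else 0

lemma rootPostMean_eq (y : (Fin w → Fin d) → Bool) :
    rootPostMean d w ρ y = Nf d w ρ y / leafW d w ρ y := rfl

lemma isingW_split (σ : TreeConfig d w Bool) :
    isingW d w ρ σ =
      (isingWRooted d w ρ true σ + isingWRooted d w ρ false σ) / 2 := by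
  unfold isingW broadcastW isingWRooted
  cases hr : rootOf σ <;> simp [hr] <;> ring

lemma isingW_spin (σ : TreeConfig d w Bool) :
    isingW d w ρ σ * spinVal (rootOf σ) =
      (isingWRooted d w ρ true σ - isingWRooted d w ρ false σ) / 2 := by
  unfold isingW broadcastW isingWRooted spinVal
  cases hr : rootOf σ <;> simp [hr] <;> ring

lemma leafW_split (y : (Fin w → Fin d) → Bool) :
    leafW d w ρ y = (leafWRooted d w ρ true y + leafWRooted d w ρ false y) / 2 := by
  unfold leafW leafWRooted
  rw [eq_div_iff (by norm_num : (2:ℝ) ≠ 0), Finset.sum_mul, ← Finset.sum_add_distrib]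
  apply Finset.sum_congr rfl
  intro σ _
  by_cases hy : leavesOf σ = y
  · simp only [hy, if_true]
    rw [isingW_split]
    ring
  · simp [hy]

lemma Nf_split (y : (Fin w → Fin d) → Bool) :
    Nf d w ρ y = (leafWRooted d w ρ true y - leafWRooted d w ρ false y) / 2 := by
  unfold Nf leafWRooted
  rw [eq_div_iff (by norm_num : (2:ℝ) ≠ 0), Finset.sum_mul, ← Finset.sum_sub_distrib]
  apply Finset.sum_congr rfl
  intro σ _
  by_cases hy : leavesOf σ = y
  · simp only [hy, if_true]
    rw [isingW_spin]
    ring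
  · simp [hy]

lemma lwR_true_eq (y : (Fin w → Fin d) → Bool) :
    leafWRooted d w ρ true y = leafW d w ρ y + Nf d w ρ y := by
  rw [leafW_split, Nf_split]; ring

lemma lwR_false_eq (y : (Fin w → Fin d) → Bool) :
    leafWRooted d w ρ false y = leafW d w ρ y - Nf d w ρ y := by
  rw [leafW_split, Nf_split]; ring

/-- Collapse the sum over leaf values. -/
lemma sum_leafWRooted_mul (r : Bool) (g : ((Fin w → Fin d) → Bool) → ℝ) :
    ∑ y : (Fin w → Fin d) → Bool, leafWRooted d w ρ r y * g y
      = ∑ σ : TreeConfig d w Bool, isingWRooted d w ρ r σ * g (leavesOf σ) := by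
  unfold leafWRooted
  simp only [Finset.sum_mul]
  rw [Finset.sum_comm]
  apply Finset.sum_congr rfl
  intro σ _
  rw [Finset.sum_eq_single (leavesOf σ)]
  · simp
  · intro y _ hy
    simp [Ne.symm hy]
  · simp

lemma sum_Nf_mul (g : ((Fin w → Fin d) → Bool) → ℝ) :
    ∑ y : (Fin w → Fin d) → Bool, Nf d w ρ y * g y
      = ∑ σ : TreeConfig d w Bool, isingW d w ρ σ * spinVal (rootOf σ) * g (leavesOf σ) := by
  unfold Nf
  simp only [Finset.sum_mul]
  rw [Finset.sum_comm]
  apply Finset.sum_congr rfl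
  intro σ _
  rw [Finset.sum_eq_single (leavesOf σ)]
  · simp
  · intro y _ hy
    simp [Ne.symm hy]
  · simp

lemma blockSum_leaves (σ : TreeConfig d w Bool) :
    blockSum d w (leavesOf σ) = leafSum d w σ := rfl

lemma sum_leafWRooted_one (r : Bool) :
    ∑ y : (Fin w → Fin d) → Bool, leafWRooted d w ρ r y = 1 := by
  have := sum_leafWRooted_mul (d := d) (w := w) (ρ := ρ) r (fun _ => (1:ℝ))
  simpa [sum_isingWRooted] using this

lemma sum_leafWRooted_Z (r : Bool) :
    ∑ y : (Fin w → Fin d) → Bool, leafWRooted d w ρ r y * blockSum d w y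
      = spinVal r * ((d:ℝ) * ρ) ^ w := by
  rw [sum_leafWRooted_mul r (blockSum d w)]
  simp only [blockSum_leaves]
  exact sum_isingWRooted_leafSum w ρ r

lemma sum_leafW : ∑ y : (Fin w → Fin d) → Bool, leafW d w ρ y = 1 := by
  simp only [leafW_split]
  rw [← Finset.sum_div, Finset.sum_add_distrib, sum_leafWRooted_one, sum_leafWRooted_one]
  norm_num

lemma sum_Nf : ∑ y : (Fin w → Fin d) → Bool, Nf d w ρ y = 0 := by
  simp only [Nf_split]
  rw [← Finset.sum_div, Finset.sum_sub_distrib, sum_leafWRooted_one, sum_leafWRooted_one]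
  norm_num

end

end AR
namespace AR

open Finset

noncomputable section

variable {d w : ℕ} {ρ : ℝ}

lemma edgeProd_nonneg {h : ℕ} (hρ0 : 0 ≤ ρ) (hρ1 : ρ ≤ 1) (σ : TreeConfig d h Bool) :
    0 ≤ edgeProd d h (isingEdge ρ) σ := by
  unfold edgeProd
  apply Finset.prod_nonneg
  intro ℓ _
  apply Finset.prod_nonneg
  intro f _
  unfold isingEdge
  split <;> nlinarith

lemma isingW_nonneg {h : ℕ} (hρ0 : 0 ≤ ρ) (hρ1 : ρ ≤ 1) (σ : TreeConfig d h Bool) :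
    0 ≤ isingW d h ρ σ := by
  unfold isingW broadcastW
  have := edgeProd_nonneg (d := d) (h := h) hρ0 hρ1 σ
  positivity

lemma leafW_nonneg (hρ0 : 0 ≤ ρ) (hρ1 : ρ ≤ 1) (y : (Fin w → Fin d) → Bool) :
    0 ≤ leafW d w ρ y := by
  unfold leafW
  apply Finset.sum_nonneg
  intro σ _
  split
  · exact isingW_nonneg hρ0 hρ1 σ
  · rfl

lemma leafWRooted_nonneg (hρ0 : 0 ≤ ρ) (hρ1 : ρ ≤ 1) (r : Bool)
    (y : (Fin w → Fin d) → Bool) : 0 ≤ leafWRooted d w ρ r y := by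
  unfold leafWRooted
  apply Finset.sum_nonneg
  intro σ _
  have hE := edgeProd_nonneg (d := d) (h := w) hρ0 hρ1 σ
  unfold isingWRooted
  split
  · split <;> simp [hE]
  · rfl

lemma lwR_eq_zero (hρ0 : 0 ≤ ρ) (hρ1 : ρ ≤ 1) (r : Bool) {y : (Fin w → Fin d) → Bool}
    (hy : leafW d w ρ y = 0) : leafWRooted d w ρ r y = 0 := by
  have h1 := leafWRooted_nonneg (d := d) (w := w) (ρ := ρ) hρ0 hρ1 true y
  have h2 := leafWRooted_nonneg (d := d) (w := w) (ρ := ρ) hρ0 hρ1 false y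
  have h3 := leafW_split (d := d) (w := w) (ρ := ρ) y
  cases r <;> linarith [hy ▸ h3]

lemma Nf_eq_zero (hρ0 : 0 ≤ ρ) (hρ1 : ρ ≤ 1) {y : (Fin w → Fin d) → Bool}
    (hy : leafW d w ρ y = 0) : Nf d w ρ y = 0 := by
  rw [Nf_split, lwR_eq_zero hρ0 hρ1 true hy, lwR_eq_zero hρ0 hρ1 false hy]
  norm_num

lemma R_eq_zero (hρ0 : 0 ≤ ρ) (hρ1 : ρ ≤ 1) {y : (Fin w → Fin d) → Bool}
    (hy : leafW d w ρ y = 0) : rootPostMean d w ρ y = 0 := by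
  rw [rootPostMean_eq, hy, div_zero]

lemma leafW_mul_R (hρ0 : 0 ≤ ρ) (hρ1 : ρ ≤ 1) (y : (Fin w → Fin d) → Bool) :
    leafW d w ρ y * rootPostMean d w ρ y = Nf d w ρ y := by
  by_cases hy : leafW d w ρ y = 0
  · rw [hy, zero_mul, Nf_eq_zero hρ0 hρ1 hy]
  · rw [rootPostMean_eq, mul_div_cancel₀ _ hy]

/-- The flip of a leaf assignment. -/
def flipY (y : (Fin w → Fin d) → Bool) : (Fin w → Fin d) → Bool := fun f => !(y f)

lemma flipY_inj {a b : (Fin w → Fin d) → Bool} (hh : flipY a = flipY b) : a = b := by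
  funext f
  have := congrFun hh f
  simpa [flipY] using this

def flipC {h : ℕ} (σ : TreeConfig d h Bool) : TreeConfig d h Bool := fun ℓ p => !(σ ℓ p)

def flipCEquiv {h : ℕ} : TreeConfig d h Bool ≃ TreeConfig d h Bool where
  toFun := flipC
  invFun := flipC
  left_inv σ := by funext ℓ p; simp [flipC]
  right_inv σ := by funext ℓ p; simp [flipC]

def flipYEquiv : ((Fin w → Fin d) → Bool) ≃ ((Fin w → Fin d) → Bool) where
  toFun := flipY
  invFun := flipY
  left_inv y := by funext f; simp [flipY]
  right_inv y := by funext f; simp [flipY]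

lemma edgeProd_flip {h : ℕ} (σ : TreeConfig d h Bool) :
    edgeProd d h (isingEdge ρ) (flipC σ) = edgeProd d h (isingEdge ρ) σ := by
  unfold edgeProd flipC
  apply Finset.prod_congr rfl
  intro ℓ _
  apply Finset.prod_congr rfl
  intro f _
  have : ∀ a b : Bool, isingEdge ρ (!a) (!b) = isingEdge ρ a b := by
    intro a b
    cases a <;> cases b <;> simp [isingEdge]
  exact this _ _

lemma isingW_flip {h : ℕ} (σ : TreeConfig d h Bool) :
    isingW d h ρ (flipC σ) = isingW d h ρ σ := by
  unfold isingW broadcastW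
  rw [edgeProd_flip]

lemma rootOf_flip {h : ℕ} (σ : TreeConfig d h Bool) :
    rootOf (flipC σ) = !(rootOf σ) := rfl

lemma leavesOf_flip (σ : TreeConfig d w Bool) :
    leavesOf (flipC σ) = flipY (leavesOf σ) := rfl

lemma spinVal_not (b : Bool) : spinVal (!b) = -spinVal b := by
  cases b <;> simp [spinVal]

lemma leafW_flip (y : (Fin w → Fin d) → Bool) :
    leafW d w ρ (flipY y) = leafW d w ρ y := by
  unfold leafW
  rw [← Equiv.sum_comp (flipCEquiv (d := d) (h := w))
    (fun σ => if leavesOf σ = flipY y then isingW d w ρ σ else 0)]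
  apply Finset.sum_congr rfl
  intro σ _
  show (if leavesOf (flipC σ) = flipY y then isingW d w ρ (flipC σ) else 0) = _
  rw [leavesOf_flip, isingW_flip]
  congr 1
  simp only [eq_iff_iff]
  constructor
  · intro hh
    exact flipY_inj hh
  · intro hh
    rw [hh]

lemma Nf_flip (y : (Fin w → Fin d) → Bool) :
    Nf d w ρ (flipY y) = -Nf d w ρ y := by
  unfold Nf
  rw [← Equiv.sum_comp (flipCEquiv (d := d) (h := w))
    (fun σ => if leavesOf σ = flipY y then isingW d w ρ σ * spinVal (rootOf σ) else 0),
    ← Finset.sum_neg_distrib]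
  apply Finset.sum_congr rfl
  intro σ _
  show (if leavesOf (flipC σ) = flipY y then isingW d w ρ (flipC σ) * spinVal (rootOf (flipC σ))
    else 0) = _
  rw [leavesOf_flip, isingW_flip, rootOf_flip, spinVal_not]
  by_cases hy : leavesOf σ = y
  · rw [if_pos (by rw [hy]), if_pos hy]
    ring
  · rw [if_neg (fun hh => hy (flipY_inj hh)), if_neg hy]
    ring

lemma Z_flip (y : (Fin w → Fin d) → Bool) :
    blockSum d w (flipY y) = -blockSum d w y := by
  unfold blockSum flipY
  rw [← Finset.sum_neg_distrib]
  exact Finset.sum_congr rfl fun f _ => spinVal_not (y f)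

lemma R_flip (y : (Fin w → Fin d) → Bool) :
    rootPostMean d w ρ (flipY y) = -rootPostMean d w ρ y := by
  rw [rootPostMean_eq, rootPostMean_eq, Nf_flip, leafW_flip, neg_div]

lemma sum_leafW_Z_Rsq (hρ0 : 0 ≤ ρ) (hρ1 : ρ ≤ 1) :
    ∑ y : (Fin w → Fin d) → Bool,
      leafW d w ρ y * blockSum d w y * rootPostMean d w ρ y ^ 2 = 0 := by
  have hflip : ∑ y : (Fin w → Fin d) → Bool,
        leafW d w ρ y * blockSum d w y * rootPostMean d w ρ y ^ 2
      = -∑ y : (Fin w → Fin d) → Bool,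
          leafW d w ρ y * blockSum d w y * rootPostMean d w ρ y ^ 2 := by
    nth_rewrite 1 [← Equiv.sum_comp (flipYEquiv (d := d) (w := w))
      (fun y => leafW d w ρ y * blockSum d w y * rootPostMean d w ρ y ^ 2)]
    rw [← Finset.sum_neg_distrib]
    apply Finset.sum_congr rfl
    intro y _
    show leafW d w ρ (flipY y) * blockSum d w (flipY y) * rootPostMean d w ρ (flipY y) ^ 2 = _
    rw [leafW_flip, Z_flip, R_flip]
    ring
  linarith

end

end AR
namespace AR

open Finset

noncomputable section

variable {d w : ℕ} {ρ : ℝ}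

lemma q_eq (hρ0 : 0 ≤ ρ) (hρ1 : ρ ≤ 1) :
    qIsing d w ρ = ∑ y : (Fin w → Fin d) → Bool, Nf d w ρ y * rootPostMean d w ρ y := by
  unfold qIsing
  apply Finset.sum_congr rfl
  intro y _
  rw [pow_two, ← mul_assoc, leafW_mul_R hρ0 hρ1]

lemma sum_leafW_R (hρ0 : 0 ≤ ρ) (hρ1 : ρ ≤ 1) :
    ∑ y : (Fin w → Fin d) → Bool, leafW d w ρ y * rootPostMean d w ρ y = 0 := by
  simp only [leafW_mul_R hρ0 hρ1]
  exact sum_Nf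

lemma sum_lwR_R (hρ0 : 0 ≤ ρ) (hρ1 : ρ ≤ 1) (r : Bool) :
    ∑ y : (Fin w → Fin d) → Bool, leafWRooted d w ρ r y * rootPostMean d w ρ y
      = spinVal r * qIsing d w ρ := by
  cases r
  · simp only [lwR_false_eq, sub_mul, Finset.sum_sub_distrib, sum_leafW_R hρ0 hρ1,
      ← q_eq hρ0 hρ1, spinVal]
    norm_num
  · simp only [lwR_true_eq, add_mul, Finset.sum_add_distrib, sum_leafW_R hρ0 hρ1,
      ← q_eq hρ0 hρ1, spinVal]
    norm_num

lemma sum_Nf_Z :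
    ∑ y : (Fin w → Fin d) → Bool, Nf d w ρ y * blockSum d w y = ((d:ℝ) * ρ) ^ w := by
  rw [sum_Nf_mul (blockSum d w)]
  simp only [blockSum_leaves, isingW_spin]
  have : ∀ σ : TreeConfig d w Bool,
      (isingWRooted d w ρ true σ - isingWRooted d w ρ false σ) / 2 * leafSum d w σ
        = (isingWRooted d w ρ true σ * leafSum d w σ
            - isingWRooted d w ρ false σ * leafSum d w σ) / 2 := by
    intro σ; ring
  simp only [this]
  rw [← Finset.sum_div, Finset.sum_sub_distrib, sum_isingWRooted_leafSum,
    sum_isingWRooted_leafSum]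
  simp [spinVal]

lemma sum_leafW_Z_R (hρ0 : 0 ≤ ρ) (hρ1 : ρ ≤ 1) :
    ∑ y : (Fin w → Fin d) → Bool,
        leafW d w ρ y * blockSum d w y * rootPostMean d w ρ y = ((d:ℝ) * ρ) ^ w := by
  have : ∀ y, leafW d w ρ y * blockSum d w y * rootPostMean d w ρ y
      = Nf d w ρ y * blockSum d w y := by
    intro y
    rw [← leafW_mul_R hρ0 hρ1]
    ring
  simp only [this]
  exact sum_Nf_Z

lemma sum_Nf_Z_R (hρ0 : 0 ≤ ρ) (hρ1 : ρ ≤ 1) :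
    ∑ y : (Fin w → Fin d) → Bool,
        Nf d w ρ y * blockSum d w y * rootPostMean d w ρ y = 0 := by
  have : ∀ y, Nf d w ρ y * blockSum d w y * rootPostMean d w ρ y
      = leafW d w ρ y * blockSum d w y * rootPostMean d w ρ y ^ 2 := by
    intro y
    rw [← leafW_mul_R hρ0 hρ1]
    ring
  simp only [this]
  exact sum_leafW_Z_Rsq hρ0 hρ1

lemma sum_lwR_Z_R (hρ0 : 0 ≤ ρ) (hρ1 : ρ ≤ 1) (r : Bool) :
    ∑ y : (Fin w → Fin d) → Bool,
        leafWRooted d w ρ r y * blockSum d w y * rootPostMean d w ρ y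
      = ((d:ℝ) * ρ) ^ w := by
  cases r
  · simp only [lwR_false_eq, sub_mul, Finset.sum_sub_distrib]
    rw [sum_leafW_Z_R hρ0 hρ1, sum_Nf_Z_R hρ0 hρ1]
    ring
  · simp only [lwR_true_eq, add_mul, Finset.sum_add_distrib]
    rw [sum_leafW_Z_R hρ0 hρ1, sum_Nf_Z_R hρ0 hρ1]
    ring

end

end AR
namespace AR

open Finset

noncomputable section

variable {d w m : ℕ} {ρ : ℝ}

lemma sum_lcaLaw (hd : 2 ≤ d) (hm : 1 ≤ m) :
    ∑ s ∈ Finset.Icc 1 m, lcaLaw d m s = 1 := by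
  have hd1 : (1:ℝ) < (d:ℝ) := by exact_mod_cast hd
  have hDm : (1:ℝ) < (d:ℝ) ^ m := one_lt_pow₀ hd1 (by omega)
  have hne : (d:ℝ) ^ m - 1 ≠ 0 := by linarith
  have hstep : ∀ s ∈ Finset.Icc 1 m, lcaLaw d m s
      = ((d:ℝ) - 1) * (d:ℝ) ^ (m - s) / ((d:ℝ) ^ m - 1) := by
    intro s hs
    rw [Finset.mem_Icc] at hs
    unfold lcaLaw
    rw [if_pos hs]
  rw [Finset.sum_congr rfl hstep]
  have hsum : ∑ s ∈ Finset.Icc 1 m, (d:ℝ) ^ (m - s) = ∑ t ∈ Finset.range m, (d:ℝ) ^ t := by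
    apply Finset.sum_nbij' (fun s => m - s) (fun t => m - t)
    · intro s hs; rw [Finset.mem_Icc] at hs; rw [Finset.mem_range]; omega
    · intro t ht; rw [Finset.mem_range] at ht; rw [Finset.mem_Icc]; omega
    · intro s hs; rw [Finset.mem_Icc] at hs; omega
    · intro t ht; rw [Finset.mem_range] at ht; omega
    · intro s _; rfl
  have hgeom : ((d:ℝ) - 1) * ∑ t ∈ Finset.range m, (d:ℝ) ^ t = (d:ℝ) ^ m - 1 := by
    have := geom_sum_mul (d:ℝ) m
    linarith [this]
  calc ∑ s ∈ Finset.Icc 1 m, ((d:ℝ) - 1) * (d:ℝ) ^ (m - s) / ((d:ℝ) ^ m - 1)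
      = (((d:ℝ) - 1) * ∑ s ∈ Finset.Icc 1 m, (d:ℝ) ^ (m - s)) / ((d:ℝ) ^ m - 1) := by
        rw [Finset.mul_sum, ← Finset.sum_div]
    _ = 1 := by rw [hsum, hgeom, div_self hne]

lemma pair_sum (s : ℕ) (r : Bool) : ∑ r' : Bool, pairRootW ρ s r r' = 1 / 2 := by
  cases r <;> simp [pairRootW, spinVal, Fintype.sum_bool] <;> ring

lemma pair_sum_spin (s : ℕ) (r : Bool) :
    ∑ r' : Bool, pairRootW ρ s r r' * spinVal r' = spinVal r * ρ ^ (2 * s) / 2 := by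
  cases r <;> simp [pairRootW, spinVal, Fintype.sum_bool] <;> ring

end

end AR
namespace AR

open Finset

noncomputable section

variable {d w m : ℕ} {ρ : ℝ}

/-- The one-step transition operator of the autoregressive chain. -/
def Pop (d w m : ℕ) (ρ : ℝ) (g : ((Fin w → Fin d) → Bool) → ℝ)
    (y : (Fin w → Fin d) → Bool) : ℝ :=
  ∑ y' : (Fin w → Fin d) → Bool, arStep d w m ρ y y' * g y'

/-- Indicator (as `x/x`) that the leaf marginal is nonzero. -/
def chi (d w : ℕ) (ρ : ℝ) (y : (Fin w → Fin d) → Bool) : ℝ :=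
  leafW d w ρ y / leafW d w ρ y

lemma chi_eq_one {y : (Fin w → Fin d) → Bool} (h : leafW d w ρ y ≠ 0) :
    chi d w ρ y = 1 := div_self h

lemma chi_eq_zero {y : (Fin w → Fin d) → Bool} (h : leafW d w ρ y = 0) :
    chi d w ρ y = 0 := by rw [chi, h, div_zero]

lemma leafW_mul_chi (y : (Fin w → Fin d) → Bool) :
    leafW d w ρ y * chi d w ρ y = leafW d w ρ y := by
  by_cases h : leafW d w ρ y = 0
  · rw [h, zero_mul]
  · rw [chi_eq_one h, mul_one]

lemma sum_leafW_chi :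
    ∑ y : (Fin w → Fin d) → Bool, leafW d w ρ y * chi d w ρ y = 1 := by
  simp only [leafW_mul_chi]
  exact sum_leafW

/-- Master rearrangement for the transition operator. -/
lemma Pop_master (g : ((Fin w → Fin d) → Bool) → ℝ) (y : (Fin w → Fin d) → Bool) :
    Pop d w m ρ g y =
      (∑ s ∈ Finset.Icc 1 m, lcaLaw d m s *
        ∑ r : Bool, ∑ r' : Bool, pairRootW ρ s r r' * leafWRooted d w ρ r y *
          (∑ y' : (Fin w → Fin d) → Bool, leafWRooted d w ρ r' y' * g y'))
        / leafW d w ρ y := by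
  unfold Pop arStep
  simp only [Finset.sum_mul, Finset.mul_sum, Finset.sum_div, div_eq_mul_inv]
  rw [Finset.sum_comm]
  apply Finset.sum_congr rfl
  intro s _
  rw [Finset.sum_comm]
  apply Finset.sum_congr rfl
  intro r _
  rw [Finset.sum_comm]
  apply Finset.sum_congr rfl
  intro r' _
  apply Finset.sum_congr rfl
  intro y' _
  ring

lemma arStep_zero (hρ0 : 0 ≤ ρ) (hρ1 : ρ ≤ 1) {y y' : (Fin w → Fin d) → Bool}
    (h : leafW d w ρ y' = 0) : arStep d w m ρ y y' = 0 := by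
  unfold arStep
  apply Finset.sum_eq_zero
  intro s _
  have hz : ∀ r' : Bool, leafWRooted d w ρ r' y' = 0 := fun r' => lwR_eq_zero hρ0 hρ1 r' h
  simp [hz]

lemma Pop_mul_chi (hρ0 : 0 ≤ ρ) (hρ1 : ρ ≤ 1) (g : ((Fin w → Fin d) → Bool) → ℝ)
    (y : (Fin w → Fin d) → Bool) :
    Pop d w m ρ (fun z => g z * chi d w ρ z) y = Pop d w m ρ g y := by
  unfold Pop
  apply Finset.sum_congr rfl
  intro y' _
  by_cases h : leafW d w ρ y' = 0
  · simp [arStep_zero (m := m) hρ0 hρ1 h]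
  · simp [chi_eq_one h]

lemma Pop_smul (t : ℝ) (g : ((Fin w → Fin d) → Bool) → ℝ) (y : (Fin w → Fin d) → Bool) :
    Pop d w m ρ (fun z => t * g z) y = t * Pop d w m ρ g y := by
  unfold Pop
  rw [Finset.mul_sum]
  apply Finset.sum_congr rfl
  intro y' _
  ring

lemma Pop_Z (hρ0 : 0 ≤ ρ) (hρ1 : ρ ≤ 1) (y : (Fin w → Fin d) → Bool) :
    Pop d w m ρ (blockSum d w) y
      = alphaAR d m ρ * ((d:ℝ) * ρ) ^ w * rootPostMean d w ρ y := by
  rw [Pop_master]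
  simp only [sum_leafWRooted_Z]
  have inner : ∀ s : ℕ,
      (∑ r : Bool, ∑ r' : Bool, pairRootW ρ s r r' * leafWRooted d w ρ r y *
        (spinVal r' * ((d:ℝ) * ρ) ^ w))
      = ρ ^ (2 * s) * (Nf d w ρ y * ((d:ℝ) * ρ) ^ w) := by
    intro s
    rw [Nf_split]
    simp [Fintype.sum_bool, pairRootW, spinVal]
    ring
  simp only [inner]
  have pull : ∀ s : ℕ, lcaLaw d m s * (ρ ^ (2 * s) * (Nf d w ρ y * ((d:ℝ) * ρ) ^ w))
      = (lcaLaw d m s * ρ ^ (2 * s)) * (Nf d w ρ y * ((d:ℝ) * ρ) ^ w) := by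
    intro s; ring
  simp only [pull]
  rw [← Finset.sum_mul]
  rw [rootPostMean_eq]
  unfold alphaAR
  ring

lemma Pop_R (hρ0 : 0 ≤ ρ) (hρ1 : ρ ≤ 1) (y : (Fin w → Fin d) → Bool) :
    Pop d w m ρ (rootPostMean d w ρ) y
      = alphaAR d m ρ * qIsing d w ρ * rootPostMean d w ρ y := by
  rw [Pop_master]
  simp only [sum_lwR_R hρ0 hρ1]
  have inner : ∀ s : ℕ,
      (∑ r : Bool, ∑ r' : Bool, pairRootW ρ s r r' * leafWRooted d w ρ r y *
        (spinVal r' * qIsing d w ρ))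
      = ρ ^ (2 * s) * (Nf d w ρ y * qIsing d w ρ) := by
    intro s
    rw [Nf_split]
    simp [Fintype.sum_bool, pairRootW, spinVal]
    ring
  simp only [inner]
  have pull : ∀ s : ℕ, lcaLaw d m s * (ρ ^ (2 * s) * (Nf d w ρ y * qIsing d w ρ))
      = (lcaLaw d m s * ρ ^ (2 * s)) * (Nf d w ρ y * qIsing d w ρ) := by
    intro s; ring
  simp only [pull]
  rw [← Finset.sum_mul]
  rw [rootPostMean_eq]
  unfold alphaAR
  ring

lemma Pop_const (hd : 2 ≤ d) (hm : 1 ≤ m) (t : ℝ) (y : (Fin w → Fin d) → Bool) :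
    Pop d w m ρ (fun _ => t) y = t * chi d w ρ y := by
  rw [Pop_master]
  have inner : ∀ s : ℕ,
      (∑ r : Bool, ∑ r' : Bool, pairRootW ρ s r r' * leafWRooted d w ρ r y *
        (∑ y' : (Fin w → Fin d) → Bool, leafWRooted d w ρ r' y' * t))
      = leafW d w ρ y * t := by
    intro s
    have hv : ∀ r' : Bool,
        (∑ y' : (Fin w → Fin d) → Bool, leafWRooted d w ρ r' y' * t) = t := by
      intro r'
      rw [← Finset.sum_mul, sum_leafWRooted_one, one_mul]
    simp only [hv]
    rw [leafW_split]
    simp [Fintype.sum_bool, pairRootW, spinVal]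
    ring
  simp only [inner]
  rw [← Finset.sum_mul, sum_lcaLaw hd hm]
  rw [chi]
  ring

lemma Pop_ZR (hd : 2 ≤ d) (hm : 1 ≤ m) (hρ0 : 0 ≤ ρ) (hρ1 : ρ ≤ 1)
    (y : (Fin w → Fin d) → Bool) :
    Pop d w m ρ (fun z => blockSum d w z * rootPostMean d w ρ z) y
      = ((d:ℝ) * ρ) ^ w * chi d w ρ y := by
  rw [Pop_master]
  have inner : ∀ s : ℕ,
      (∑ r : Bool, ∑ r' : Bool, pairRootW ρ s r r' * leafWRooted d w ρ r y *
        (∑ y' : (Fin w → Fin d) → Bool, leafWRooted d w ρ r' y' *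
          (blockSum d w y' * rootPostMean d w ρ y')))
      = leafW d w ρ y * ((d:ℝ) * ρ) ^ w := by
    intro s
    have hv : ∀ r' : Bool,
        (∑ y' : (Fin w → Fin d) → Bool, leafWRooted d w ρ r' y' *
          (blockSum d w y' * rootPostMean d w ρ y')) = ((d:ℝ) * ρ) ^ w := by
      intro r'
      rw [← sum_lwR_Z_R hρ0 hρ1 r']
      apply Finset.sum_congr rfl
      intro y' _
      ring
    simp only [hv]
    rw [leafW_split]
    simp [Fintype.sum_bool, pairRootW, spinVal]
    ring
  simp only [inner]
  rw [← Finset.sum_mul, sum_lcaLaw hd hm]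
  rw [chi]
  ring

lemma Pop_chi (hd : 2 ≤ d) (hm : 1 ≤ m) (hρ0 : 0 ≤ ρ) (hρ1 : ρ ≤ 1)
    (y : (Fin w → Fin d) → Bool) :
    Pop d w m ρ (chi d w ρ) y = chi d w ρ y := by
  have hf : (chi d w ρ : ((Fin w → Fin d) → Bool) → ℝ)
      = (fun z => (fun _ : (Fin w → Fin d) → Bool => (1:ℝ)) z * chi d w ρ z) :=
    funext fun z => by simp
  conv_lhs => rw [hf]
  rw [Pop_mul_chi hρ0 hρ1, Pop_const hd hm, one_mul]

end

end AR
namespace AR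

open Finset

noncomputable section

variable {d w m : ℕ} {ρ : ℝ}

/-- Conditional weight of a chain of `k` further blocks given a start block. -/
def chainW (d w m : ℕ) (ρ : ℝ) : ∀ (k : ℕ),
    ((Fin w → Fin d) → Bool) → (Fin k → ((Fin w → Fin d) → Bool)) → ℝ
  | 0, _, _ => 1
  | k + 1, y, Y => arStep d w m ρ y (Y 0) * chainW d w m ρ k (Y 0) (fun i => Y i.succ)

/-- Nested application of the transition operator to a sequence of observables. -/
def nestF (d w m : ℕ) (ρ : ℝ) : ∀ (k : ℕ),
    (Fin k → (((Fin w → Fin d) → Bool) → ℝ)) → ((Fin w → Fin d) → Bool) → ℝ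
  | 0, _ => fun _ => 1
  | k + 1, Φ => Pop d w m ρ (fun y => Φ 0 y * nestF d w m ρ k (fun i => Φ i.succ) y)

lemma chain_eval : ∀ (k : ℕ) (Φ : Fin k → (((Fin w → Fin d) → Bool) → ℝ))
    (y : (Fin w → Fin d) → Bool),
    ∑ Y : Fin k → ((Fin w → Fin d) → Bool),
        chainW d w m ρ k y Y * ∏ i : Fin k, Φ i (Y i)
      = nestF d w m ρ k Φ y := by
  intro k
  induction k with
  | zero =>
      intro Φ y
      rw [Fintype.sum_unique]
      simp [chainW, nestF]
  | succ k ih =>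
      intro Φ y
      rw [← Equiv.sum_comp (Fin.consEquiv (fun _ : Fin (k + 1) => (Fin w → Fin d) → Bool))
          (fun Y => chainW d w m ρ (k + 1) y Y * ∏ i : Fin (k + 1), Φ i (Y i)),
        Fintype.sum_prod_type]
      have hterm : ∀ (y1 : (Fin w → Fin d) → Bool)
          (Y' : Fin k → ((Fin w → Fin d) → Bool)),
          chainW d w m ρ (k + 1) y (Fin.cons (α := fun _ : Fin (k + 1) => (Fin w → Fin d) → Bool) y1 Y') *
              ∏ i : Fin (k + 1), Φ i (Fin.cons (α := fun _ : Fin (k + 1) => (Fin w → Fin d) → Bool) y1 Y' i)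
            = arStep d w m ρ y y1 *
                (Φ 0 y1 * (chainW d w m ρ k y1 Y' * ∏ i : Fin k, Φ i.succ (Y' i))) := by
        intro y1 Y'
        have h1 : chainW d w m ρ (k + 1) y (Fin.cons (α := fun _ : Fin (k + 1) => (Fin w → Fin d) → Bool) y1 Y')
            = arStep d w m ρ y y1 * chainW d w m ρ k y1 Y' := by
          show arStep d w m ρ y (Fin.cons (α := fun _ : Fin (k + 1) => (Fin w → Fin d) → Bool) y1 Y' 0) *
              chainW d w m ρ k (Fin.cons (α := fun _ : Fin (k + 1) => (Fin w → Fin d) → Bool) y1 Y' 0) (fun i => Fin.cons (α := fun _ : Fin (k + 1) => (Fin w → Fin d) → Bool) y1 Y' i.succ) = _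
          simp only [Fin.cons_zero, Fin.cons_succ]
        have h2 : (∏ i : Fin (k + 1), Φ i (Fin.cons (α := fun _ : Fin (k + 1) => (Fin w → Fin d) → Bool) y1 Y' i))
            = Φ 0 y1 * ∏ i : Fin k, Φ i.succ (Y' i) := by
          rw [Fin.prod_univ_succ]
          simp only [Fin.cons_zero, Fin.cons_succ]
        rw [h1, h2]
        ring
      have hmid : ∀ y1 : (Fin w → Fin d) → Bool,
          (∑ Y' : Fin k → ((Fin w → Fin d) → Bool),
            chainW d w m ρ (k + 1) y (Fin.cons (α := fun _ : Fin (k + 1) => (Fin w → Fin d) → Bool) y1 Y') *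
              ∏ i : Fin (k + 1), Φ i (Fin.cons (α := fun _ : Fin (k + 1) => (Fin w → Fin d) → Bool) y1 Y' i))
          = arStep d w m ρ y y1 * (Φ 0 y1 * nestF d w m ρ k (fun i => Φ i.succ) y1) := by
        intro y1
        simp only [hterm]
        rw [← Finset.mul_sum, ← Finset.mul_sum, ih (fun i => Φ i.succ) y1]
      calc (∑ y1 : (Fin w → Fin d) → Bool, ∑ Y' : Fin k → ((Fin w → Fin d) → Bool),
            chainW d w m ρ (k + 1) y
                ((Fin.consEquiv (fun _ : Fin (k + 1) => (Fin w → Fin d) → Bool)) (y1, Y')) *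
              ∏ i : Fin (k + 1), Φ i
                ((Fin.consEquiv (fun _ : Fin (k + 1) => (Fin w → Fin d) → Bool)) (y1, Y') i))
          = ∑ y1 : (Fin w → Fin d) → Bool,
              arStep d w m ρ y y1 * (Φ 0 y1 * nestF d w m ρ k (fun i => Φ i.succ) y1) := by
            apply Finset.sum_congr rfl
            intro y1 _
            exact hmid y1
        _ = nestF d w m ρ (k + 1) Φ y := rfl

/-- The `arWeight` decomposes as initial law times conditional chain weight. -/
lemma prod_chain : ∀ (k : ℕ) (Y : Fin (k + 1) → ((Fin w → Fin d) → Bool)),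
    (∏ i : Fin k, arStep d w m ρ (Y ⟨i.val, by omega⟩) (Y ⟨i.val + 1, by omega⟩))
      = chainW d w m ρ k (Y 0) (fun i => Y i.succ) := by
  intro k
  induction k with
  | zero => intro Y; simp [chainW]
  | succ k ih =>
      intro Y
      rw [Fin.prod_univ_succ]
      have h0 : (Y ⟨(0 : Fin (k + 1)).val, by omega⟩) = Y 0 :=
        congrArg Y (Fin.ext (by simp))
      have h1 : (Y ⟨(0 : Fin (k + 1)).val + 1, by omega⟩) = Y (Fin.succ 0) :=
        congrArg Y (Fin.ext (by simp))
      have hrest : (∏ i : Fin k,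
          arStep d w m ρ (Y ⟨(Fin.succ i).val, by omega⟩) (Y ⟨(Fin.succ i).val + 1, by omega⟩))
          = chainW d w m ρ k (Y (Fin.succ 0)) (fun i => Y (Fin.succ (Fin.succ i))) := by
        have hIH := ih (fun j => Y (Fin.succ j))
        rw [← hIH]
        apply Finset.prod_congr rfl
        intro i _
        have e1 : (Y ⟨(Fin.succ i).val, by omega⟩)
            = Y (Fin.succ (⟨i.val, by omega⟩ : Fin (k + 1))) := congrArg Y (Fin.ext (by simp))
        have e2 : (Y ⟨(Fin.succ i).val + 1, by omega⟩)
            = Y (Fin.succ (⟨i.val + 1, by omega⟩ : Fin (k + 1))) := congrArg Y (Fin.ext (by simp))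
        rw [e1, e2]
      rw [h0, h1, hrest]
      show _ = arStep d w m ρ (Y 0) ((fun i => Y (Fin.succ i)) 0) *
        chainW d w m ρ k ((fun i => Y (Fin.succ i)) 0) (fun i => (fun j => Y (Fin.succ j)) i.succ)
      rfl

lemma arWeight_eq (k : ℕ) (Y : Fin (k + 1) → ((Fin w → Fin d) → Bool)) :
    arWeight d w m (k + 1) ρ Y
      = leafW d w ρ (Y 0) * chainW d w m ρ k (Y 0) (fun i => Y i.succ) := by
  unfold arWeight
  rw [dif_pos (Nat.succ_pos k)]
  have h0 : (Y ⟨0, Nat.succ_pos k⟩) = Y 0 := congrArg Y (Fin.ext (by simp))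
  rw [h0]
  congr 1
  exact prod_chain k Y

end

end AR
namespace AR

open Finset

noncomputable section

variable {d w m : ℕ} {ρ : ℝ}

def mk1 (d w : ℕ) (e : ℕ) {k : ℕ} : Fin k → (((Fin w → Fin d) → Bool) → ℝ) :=
  fun i => if i.val = e then blockSum d w else fun _ => 1

def mk2 (d w : ℕ) (c e : ℕ) {k : ℕ} : Fin k → (((Fin w → Fin d) → Bool) → ℝ) :=
  fun i => if i.val = c ∨ i.val = e then blockSum d w else fun _ => 1

def mk3 (d w : ℕ) (b c e : ℕ) {k : ℕ} : Fin k → (((Fin w → Fin d) → Bool) → ℝ) :=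
  fun i => if i.val = b ∨ i.val = c ∨ i.val = e then blockSum d w else fun _ => 1

def mk4 (d w : ℕ) (a b c e : ℕ) {k : ℕ} : Fin k → (((Fin w → Fin d) → Bool) → ℝ) :=
  fun i => if i.val = a ∨ i.val = b ∨ i.val = c ∨ i.val = e then blockSum d w else fun _ => 1

lemma mk1_succ (e k : ℕ) :
    (fun i : Fin k => mk1 d w (e + 1) i.succ) = mk1 d w e := by
  funext i
  by_cases hi : i.val = e
  · simp [mk1, Fin.val_succ, hi]
  · have h' : ¬(i.val + 1 = e + 1) := by omega
    simp [mk1, Fin.val_succ, hi, h']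

lemma mk1_zero_head (k : ℕ) : mk1 d w 0 (0 : Fin (k + 1)) = blockSum d w := by
  simp [mk1]

lemma mk1_zero_tail (k : ℕ) :
    (fun i : Fin k => mk1 d w 0 i.succ) = fun _ => (fun _ => (1 : ℝ)) := by
  funext i
  simp [mk1, Fin.val_succ]

lemma mk2_succ (c e k : ℕ) :
    (fun i : Fin k => mk2 d w (c + 1) (e + 1) i.succ) = mk2 d w c e := by
  funext i
  by_cases hc : i.val = c
  · simp [mk2, Fin.val_succ, hc]
  · by_cases he : i.val = e
    · simp [mk2, Fin.val_succ, he]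
    · have h1 : ¬(i.val + 1 = c + 1) := by omega
      have h2 : ¬(i.val + 1 = e + 1) := by omega
      simp [mk2, Fin.val_succ, hc, he, h1, h2]

lemma mk2_zero_head (e k : ℕ) : mk2 d w 0 e (0 : Fin (k + 1)) = blockSum d w := by
  simp [mk2]

lemma mk2_zero_tail (e k : ℕ) :
    (fun i : Fin k => mk2 d w 0 (e + 1) i.succ) = mk1 d w e := by
  funext i
  by_cases he : i.val = e
  · simp [mk2, mk1, Fin.val_succ, he]
  · have h2 : ¬(i.val + 1 = e + 1) := by omega
    simp [mk2, mk1, Fin.val_succ, he, h2]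

lemma mk3_succ (b c e k : ℕ) :
    (fun i : Fin k => mk3 d w (b + 1) (c + 1) (e + 1) i.succ) = mk3 d w b c e := by
  funext i
  unfold mk3
  simp only [Fin.val_succ]
  have : (i.val + 1 = b + 1 ∨ i.val + 1 = c + 1 ∨ i.val + 1 = e + 1)
      ↔ (i.val = b ∨ i.val = c ∨ i.val = e) := by omega
  rw [if_congr this rfl rfl]

lemma mk3_zero_head (c e k : ℕ) : mk3 d w 0 c e (0 : Fin (k + 1)) = blockSum d w := by
  simp [mk3]

lemma mk3_zero_tail (c e k : ℕ) :
    (fun i : Fin k => mk3 d w 0 (c + 1) (e + 1) i.succ) = mk2 d w c e := by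
  funext i
  unfold mk3 mk2
  simp only [Fin.val_succ]
  have : (i.val + 1 = 0 ∨ i.val + 1 = c + 1 ∨ i.val + 1 = e + 1)
      ↔ (i.val = c ∨ i.val = e) := by omega
  rw [if_congr this rfl rfl]

lemma mk4_succ (a b c e k : ℕ) :
    (fun i : Fin k => mk4 d w (a + 1) (b + 1) (c + 1) (e + 1) i.succ) = mk4 d w a b c e := by
  funext i
  unfold mk4
  simp only [Fin.val_succ]
  have : (i.val + 1 = a + 1 ∨ i.val + 1 = b + 1 ∨ i.val + 1 = c + 1 ∨ i.val + 1 = e + 1)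
      ↔ (i.val = a ∨ i.val = b ∨ i.val = c ∨ i.val = e) := by omega
  rw [if_congr this rfl rfl]

lemma mk4_zero_head (b c e k : ℕ) : mk4 d w 0 b c e (0 : Fin (k + 1)) = blockSum d w := by
  simp [mk4]

lemma mk4_zero_tail (b c e k : ℕ) :
    (fun i : Fin k => mk4 d w 0 (b + 1) (c + 1) (e + 1) i.succ) = mk3 d w b c e := by
  funext i
  unfold mk4 mk3
  simp only [Fin.val_succ]
  have : (i.val + 1 = 0 ∨ i.val + 1 = b + 1 ∨ i.val + 1 = c + 1 ∨ i.val + 1 = e + 1)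
      ↔ (i.val = b ∨ i.val = c ∨ i.val = e) := by omega
  rw [if_congr this rfl rfl]

lemma prodMk3 {k : ℕ} (b c e : ℕ) (hbc : b < c) (hce : c < e) (hek : e < k)
    (Y : Fin k → ((Fin w → Fin d) → Bool)) :
    (∏ i : Fin k, mk3 d w b c e i (Y i))
      = blockSum d w (Y ⟨b, by omega⟩) * blockSum d w (Y ⟨c, by omega⟩) *
          blockSum d w (Y ⟨e, by omega⟩) := by
  have hb : b < k := by omega
  have hc : c < k := by omega
  set tset : Finset (Fin k) :=
    insert (⟨b, hb⟩ : Fin k) (insert (⟨c, hc⟩ : Fin k) {(⟨e, hek⟩ : Fin k)}) with htset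
  have hsub : (∏ i ∈ tset, mk3 d w b c e i (Y i)) = ∏ i : Fin k, mk3 d w b c e i (Y i) := by
    apply Finset.prod_subset (Finset.subset_univ tset)
    intro x _ hx
    rw [htset] at hx
    simp only [Finset.mem_insert, Finset.mem_singleton, Fin.ext_iff] at hx
    push_neg at hx
    unfold mk3
    rw [if_neg (by omega)]
  rw [← hsub, htset]
  rw [Finset.prod_insert (by simp [Fin.ext_iff]; omega),
    Finset.prod_insert (by simp [Fin.ext_iff]; omega), Finset.prod_singleton]
  unfold mk3
  rw [if_pos (by simp), if_pos (by simp), if_pos (by simp)]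
  ring

lemma prodMk4 {k : ℕ} (a b c e : ℕ) (hab : a < b) (hbc : b < c) (hce : c < e) (hek : e < k)
    (Y : Fin k → ((Fin w → Fin d) → Bool)) :
    (∏ i : Fin k, mk4 d w a b c e i (Y i))
      = blockSum d w (Y ⟨a, by omega⟩) * blockSum d w (Y ⟨b, by omega⟩) *
          blockSum d w (Y ⟨c, by omega⟩) * blockSum d w (Y ⟨e, by omega⟩) := by
  have ha : a < k := by omega
  have hb : b < k := by omega
  have hc : c < k := by omega
  set tset : Finset (Fin k) :=
    insert (⟨a, ha⟩ : Fin k)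
      (insert (⟨b, hb⟩ : Fin k) (insert (⟨c, hc⟩ : Fin k) {(⟨e, hek⟩ : Fin k)})) with htset
  have hsub : (∏ i ∈ tset, mk4 d w a b c e i (Y i)) = ∏ i : Fin k, mk4 d w a b c e i (Y i) := by
    apply Finset.prod_subset (Finset.subset_univ tset)
    intro x _ hx
    rw [htset] at hx
    simp only [Finset.mem_insert, Finset.mem_singleton, Fin.ext_iff] at hx
    push_neg at hx
    unfold mk4
    rw [if_neg (by omega)]
  rw [← hsub, htset]
  rw [Finset.prod_insert (by simp [Fin.ext_iff]; omega),
    Finset.prod_insert (by simp [Fin.ext_iff]; omega),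
    Finset.prod_insert (by simp [Fin.ext_iff]; omega), Finset.prod_singleton]
  unfold mk4
  rw [if_pos (by simp), if_pos (by simp), if_pos (by simp), if_pos (by simp)]
  ring

end

end AR
namespace AR

open Finset

noncomputable section

variable {d w m : ℕ} {ρ : ℝ}

lemma Pop_tchi (hd : 2 ≤ d) (hm : 1 ≤ m) (hρ0 : 0 ≤ ρ) (hρ1 : ρ ≤ 1) (t : ℝ)
    (y : (Fin w → Fin d) → Bool) :
    Pop d w m ρ (fun z => t * chi d w ρ z) y = t * chi d w ρ y := by
  rw [Pop_smul, Pop_chi hd hm hρ0 hρ1]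

lemma Pop_tR (hρ0 : 0 ≤ ρ) (hρ1 : ρ ≤ 1) (t : ℝ) (y : (Fin w → Fin d) → Bool) :
    Pop d w m ρ (fun z => t * rootPostMean d w ρ z) y
      = t * (alphaAR d m ρ * qIsing d w ρ) * rootPostMean d w ρ y := by
  rw [Pop_smul, Pop_R hρ0 hρ1]
  ring

lemma Pop_tZchi (hρ0 : 0 ≤ ρ) (hρ1 : ρ ≤ 1) (t : ℝ) (y : (Fin w → Fin d) → Bool) :
    Pop d w m ρ (fun z => t * (blockSum d w z * chi d w ρ z)) y
      = t * (alphaAR d m ρ * ((d:ℝ) * ρ) ^ w) * rootPostMean d w ρ y := by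
  rw [Pop_smul, Pop_mul_chi hρ0 hρ1 (blockSum d w), Pop_Z hρ0 hρ1]
  ring

lemma Pop_tZR (hd : 2 ≤ d) (hm : 1 ≤ m) (hρ0 : 0 ≤ ρ) (hρ1 : ρ ≤ 1) (t : ℝ)
    (y : (Fin w → Fin d) → Bool) :
    Pop d w m ρ (fun z => t * (blockSum d w z * rootPostMean d w ρ z)) y
      = t * (((d:ℝ) * ρ) ^ w * chi d w ρ y) := by
  rw [Pop_smul, Pop_ZR hd hm hρ0 hρ1]

lemma NE0 (hd : 2 ≤ d) (hm : 1 ≤ m) (hρ0 : 0 ≤ ρ) (hρ1 : ρ ≤ 1) :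
    ∀ (t : ℕ) (y : (Fin w → Fin d) → Bool),
      nestF d w m ρ (t + 1) (fun _ => fun _ => (1:ℝ)) y = chi d w ρ y := by
  intro t
  induction t with
  | zero =>
      intro y
      rw [show nestF d w m ρ (0 + 1) (fun _ => fun _ => (1:ℝ)) y
        = Pop d w m ρ (fun z => (1:ℝ) *
            nestF d w m ρ 0 (fun _ => fun _ => (1:ℝ)) z) y from rfl]
      have harg : (fun z => (1:ℝ) * nestF d w m ρ 0 (fun _ => fun _ => (1:ℝ)) z)
          = (fun _ : (Fin w → Fin d) → Bool => (1:ℝ)) := funext fun z => by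
        show (1:ℝ) * 1 = 1
        ring
      rw [harg, Pop_const hd hm, one_mul]
  | succ t ih =>
      intro y
      rw [show nestF d w m ρ (t + 1 + 1) (fun _ => fun _ => (1:ℝ)) y
        = Pop d w m ρ (fun z => (1:ℝ) *
            nestF d w m ρ (t + 1) (fun _ => fun _ => (1:ℝ)) z) y from rfl]
      have harg : (fun z => (1:ℝ) * nestF d w m ρ (t + 1) (fun _ => fun _ => (1:ℝ)) z)
          = (fun z => (1:ℝ) * chi d w ρ z) := funext fun z => by rw [ih z]
      rw [harg, Pop_tchi hd hm hρ0 hρ1, one_mul]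

lemma NE1 (hd : 2 ≤ d) (hm : 1 ≤ m) (hρ0 : 0 ≤ ρ) (hρ1 : ρ ≤ 1) :
    ∀ (e k : ℕ), e < k → ∀ y : (Fin w → Fin d) → Bool,
      nestF d w m ρ k (mk1 d w e) y
        = (alphaAR d m ρ * qIsing d w ρ) ^ e *
            (alphaAR d m ρ * ((d:ℝ) * ρ) ^ w) * rootPostMean d w ρ y := by
  intro e
  induction e with
  | zero =>
      intro k hk y
      obtain ⟨t, rfl⟩ : ∃ t, k = t + 1 := ⟨k - 1, by omega⟩
      rw [show nestF d w m ρ (t + 1) (mk1 d w 0) y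
        = Pop d w m ρ (fun z => mk1 d w 0 (0 : Fin (t + 1)) z *
            nestF d w m ρ t (fun i => mk1 d w 0 i.succ) z) y from rfl]
      rw [mk1_zero_tail, mk1_zero_head]
      cases t with
      | zero =>
          have harg : (fun z => blockSum d w z *
                nestF d w m ρ 0 (fun _ => fun _ => (1:ℝ)) z) = blockSum d w :=
            funext fun z => by
              show blockSum d w z * 1 = blockSum d w z
              ring
          rw [harg, Pop_Z hρ0 hρ1, pow_zero, one_mul]
      | succ t' =>
          have harg : (fun z => blockSum d w z *
                nestF d w m ρ (t' + 1) (fun _ => fun _ => (1:ℝ)) z)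
              = (fun z => blockSum d w z * chi d w ρ z) :=
            funext fun z => by rw [NE0 hd hm hρ0 hρ1 t' z]
          rw [harg, Pop_mul_chi hρ0 hρ1 (blockSum d w), Pop_Z hρ0 hρ1, pow_zero, one_mul]
  | succ e ih =>
      intro k hk y
      obtain ⟨t, rfl⟩ : ∃ t, k = t + 1 := ⟨k - 1, by omega⟩
      have het : e < t := by omega
      rw [show nestF d w m ρ (t + 1) (mk1 d w (e + 1)) y
        = Pop d w m ρ (fun z => mk1 d w (e + 1) (0 : Fin (t + 1)) z *
            nestF d w m ρ t (fun i => mk1 d w (e + 1) i.succ) z) y from rfl]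
      rw [mk1_succ]
      have hhead : mk1 d w (e + 1) (0 : Fin (t + 1)) = (fun _ => (1:ℝ)) := by
        unfold mk1
        rw [if_neg (by simp)]
      rw [hhead]
      have harg : (fun z => (fun _ : (Fin w → Fin d) → Bool => (1:ℝ)) z *
            nestF d w m ρ t (mk1 d w e) z)
          = (fun z => ((alphaAR d m ρ * qIsing d w ρ) ^ e *
              (alphaAR d m ρ * ((d:ℝ) * ρ) ^ w)) * rootPostMean d w ρ z) :=
        funext fun z => by
          show (1:ℝ) * nestF d w m ρ t (mk1 d w e) z = _
          rw [ih t het z]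
          ring
      rw [harg, Pop_tR hρ0 hρ1, pow_succ]
      ring

lemma NE2 (hd : 2 ≤ d) (hm : 1 ≤ m) (hρ0 : 0 ≤ ρ) (hρ1 : ρ ≤ 1) :
    ∀ (c e k : ℕ), c < e → e < k → ∀ y : (Fin w → Fin d) → Bool,
      nestF d w m ρ k (mk2 d w c e) y
        = ((alphaAR d m ρ * qIsing d w ρ) ^ (e - c - 1) *
            (alphaAR d m ρ * ((d:ℝ) * ρ) ^ w * ((d:ℝ) * ρ) ^ w)) * chi d w ρ y := by
  intro c
  induction c with
  | zero =>
      intro e k hce hek y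
      obtain ⟨e', rfl⟩ : ∃ e', e = e' + 1 := ⟨e - 1, by omega⟩
      obtain ⟨t, rfl⟩ : ∃ t, k = t + 1 := ⟨k - 1, by omega⟩
      rw [show nestF d w m ρ (t + 1) (mk2 d w 0 (e' + 1)) y
        = Pop d w m ρ (fun z => mk2 d w 0 (e' + 1) (0 : Fin (t + 1)) z *
            nestF d w m ρ t (fun i => mk2 d w 0 (e' + 1) i.succ) z) y from rfl]
      rw [mk2_zero_tail, mk2_zero_head]
      have harg : (fun z => blockSum d w z * nestF d w m ρ t (mk1 d w e') z)
          = (fun z => ((alphaAR d m ρ * qIsing d w ρ) ^ e' *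
              (alphaAR d m ρ * ((d:ℝ) * ρ) ^ w)) *
              (blockSum d w z * rootPostMean d w ρ z)) :=
        funext fun z => by
          rw [NE1 hd hm hρ0 hρ1 e' t (by omega) z]
          ring
      rw [harg, Pop_tZR hd hm hρ0 hρ1]
      have hE : e' + 1 - 0 - 1 = e' := by omega
      rw [hE]
      ring
  | succ c ih =>
      intro e k hce hek y
      obtain ⟨e', rfl⟩ : ∃ e', e = e' + 1 := ⟨e - 1, by omega⟩
      obtain ⟨t, rfl⟩ : ∃ t, k = t + 1 := ⟨k - 1, by omega⟩
      rw [show nestF d w m ρ (t + 1) (mk2 d w (c + 1) (e' + 1)) y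
        = Pop d w m ρ (fun z => mk2 d w (c + 1) (e' + 1) (0 : Fin (t + 1)) z *
            nestF d w m ρ t (fun i => mk2 d w (c + 1) (e' + 1) i.succ) z) y from rfl]
      rw [mk2_succ]
      have hhead : mk2 d w (c + 1) (e' + 1) (0 : Fin (t + 1)) = (fun _ => (1:ℝ)) := by
        unfold mk2
        rw [if_neg (by simp)]
      rw [hhead]
      have harg : (fun z => (fun _ : (Fin w → Fin d) → Bool => (1:ℝ)) z *
            nestF d w m ρ t (mk2 d w c e') z)
          = (fun z => ((alphaAR d m ρ * qIsing d w ρ) ^ (e' - c - 1) *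
              (alphaAR d m ρ * ((d:ℝ) * ρ) ^ w * ((d:ℝ) * ρ) ^ w)) * chi d w ρ z) :=
        funext fun z => by
          show (1:ℝ) * nestF d w m ρ t (mk2 d w c e') z = _
          rw [ih e' t (by omega) (by omega) z]
          ring
      rw [harg, Pop_tchi hd hm hρ0 hρ1]
      have hE : e' + 1 - (c + 1) - 1 = e' - c - 1 := by omega
      rw [hE]

lemma NE3 (hd : 2 ≤ d) (hm : 1 ≤ m) (hρ0 : 0 ≤ ρ) (hρ1 : ρ ≤ 1) :
    ∀ (b c e k : ℕ), b < c → c < e → e < k → ∀ y : (Fin w → Fin d) → Bool,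
      nestF d w m ρ k (mk3 d w b c e) y
        = ((alphaAR d m ρ * qIsing d w ρ) ^ (b + (e - c - 1)) *
            (alphaAR d m ρ * alphaAR d m ρ *
              (((d:ℝ) * ρ) ^ w * ((d:ℝ) * ρ) ^ w * ((d:ℝ) * ρ) ^ w))) *
            rootPostMean d w ρ y := by
  intro b
  induction b with
  | zero =>
      intro c e k hbc hce hek y
      obtain ⟨c', rfl⟩ : ∃ c', c = c' + 1 := ⟨c - 1, by omega⟩
      obtain ⟨e', rfl⟩ : ∃ e', e = e' + 1 := ⟨e - 1, by omega⟩
      obtain ⟨t, rfl⟩ : ∃ t, k = t + 1 := ⟨k - 1, by omega⟩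
      rw [show nestF d w m ρ (t + 1) (mk3 d w 0 (c' + 1) (e' + 1)) y
        = Pop d w m ρ (fun z => mk3 d w 0 (c' + 1) (e' + 1) (0 : Fin (t + 1)) z *
            nestF d w m ρ t (fun i => mk3 d w 0 (c' + 1) (e' + 1) i.succ) z) y from rfl]
      rw [mk3_zero_tail, mk3_zero_head]
      have harg : (fun z => blockSum d w z * nestF d w m ρ t (mk2 d w c' e') z)
          = (fun z => ((alphaAR d m ρ * qIsing d w ρ) ^ (e' - c' - 1) *
              (alphaAR d m ρ * ((d:ℝ) * ρ) ^ w * ((d:ℝ) * ρ) ^ w)) *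
              (blockSum d w z * chi d w ρ z)) :=
        funext fun z => by
          rw [NE2 hd hm hρ0 hρ1 c' e' t (by omega) (by omega) z]
          ring
      rw [harg, Pop_tZchi hρ0 hρ1]
      have hE : 0 + (e' + 1 - (c' + 1) - 1) = e' - c' - 1 := by omega
      rw [hE]
      ring
  | succ b ih =>
      intro c e k hbc hce hek y
      obtain ⟨c', rfl⟩ : ∃ c', c = c' + 1 := ⟨c - 1, by omega⟩
      obtain ⟨e', rfl⟩ : ∃ e', e = e' + 1 := ⟨e - 1, by omega⟩
      obtain ⟨t, rfl⟩ : ∃ t, k = t + 1 := ⟨k - 1, by omega⟩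
      rw [show nestF d w m ρ (t + 1) (mk3 d w (b + 1) (c' + 1) (e' + 1)) y
        = Pop d w m ρ (fun z => mk3 d w (b + 1) (c' + 1) (e' + 1) (0 : Fin (t + 1)) z *
            nestF d w m ρ t (fun i => mk3 d w (b + 1) (c' + 1) (e' + 1) i.succ) z) y
        from rfl]
      rw [mk3_succ]
      have hhead : mk3 d w (b + 1) (c' + 1) (e' + 1) (0 : Fin (t + 1)) = (fun _ => (1:ℝ)) := by
        unfold mk3
        rw [if_neg (by simp)]
      rw [hhead]
      have harg : (fun z => (fun _ : (Fin w → Fin d) → Bool => (1:ℝ)) z *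
            nestF d w m ρ t (mk3 d w b c' e') z)
          = (fun z => ((alphaAR d m ρ * qIsing d w ρ) ^ (b + (e' - c' - 1)) *
              (alphaAR d m ρ * alphaAR d m ρ *
                (((d:ℝ) * ρ) ^ w * ((d:ℝ) * ρ) ^ w * ((d:ℝ) * ρ) ^ w))) *
              rootPostMean d w ρ z) :=
        funext fun z => by
          show (1:ℝ) * nestF d w m ρ t (mk3 d w b c' e') z = _
          rw [ih c' e' t (by omega) (by omega) (by omega) z]
          ring
      rw [harg, Pop_tR hρ0 hρ1]
      have hE : b + 1 + (e' + 1 - (c' + 1) - 1) = (b + (e' - c' - 1)) + 1 := by omega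
      rw [hE, pow_succ]
      ring

lemma NE4 (hd : 2 ≤ d) (hm : 1 ≤ m) (hρ0 : 0 ≤ ρ) (hρ1 : ρ ≤ 1) :
    ∀ (a b c e k : ℕ), a < b → b < c → c < e → e < k → ∀ y : (Fin w → Fin d) → Bool,
      nestF d w m ρ k (mk4 d w a b c e) y
        = ((alphaAR d m ρ * qIsing d w ρ) ^ ((b - a - 1) + (e - c - 1)) *
            (alphaAR d m ρ * alphaAR d m ρ *
              (((d:ℝ) * ρ) ^ w * ((d:ℝ) * ρ) ^ w * ((d:ℝ) * ρ) ^ w * ((d:ℝ) * ρ) ^ w))) *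
            chi d w ρ y := by
  intro a
  induction a with
  | zero =>
      intro b c e k hab hbc hce hek y
      obtain ⟨b', rfl⟩ : ∃ b', b = b' + 1 := ⟨b - 1, by omega⟩
      obtain ⟨c', rfl⟩ : ∃ c', c = c' + 1 := ⟨c - 1, by omega⟩
      obtain ⟨e', rfl⟩ : ∃ e', e = e' + 1 := ⟨e - 1, by omega⟩
      obtain ⟨t, rfl⟩ : ∃ t, k = t + 1 := ⟨k - 1, by omega⟩
      rw [show nestF d w m ρ (t + 1) (mk4 d w 0 (b' + 1) (c' + 1) (e' + 1)) y
        = Pop d w m ρ (fun z => mk4 d w 0 (b' + 1) (c' + 1) (e' + 1) (0 : Fin (t + 1)) z *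
            nestF d w m ρ t (fun i => mk4 d w 0 (b' + 1) (c' + 1) (e' + 1) i.succ) z) y
        from rfl]
      rw [mk4_zero_tail, mk4_zero_head]
      have harg : (fun z => blockSum d w z * nestF d w m ρ t (mk3 d w b' c' e') z)
          = (fun z => ((alphaAR d m ρ * qIsing d w ρ) ^ (b' + (e' - c' - 1)) *
              (alphaAR d m ρ * alphaAR d m ρ *
                (((d:ℝ) * ρ) ^ w * ((d:ℝ) * ρ) ^ w * ((d:ℝ) * ρ) ^ w))) *
              (blockSum d w z * rootPostMean d w ρ z)) :=
        funext fun z => by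
          rw [NE3 hd hm hρ0 hρ1 b' c' e' t (by omega) (by omega) (by omega) z]
          ring
      rw [harg, Pop_tZR hd hm hρ0 hρ1]
      have hE : (b' + 1 - 0 - 1) + (e' + 1 - (c' + 1) - 1) = b' + (e' - c' - 1) := by omega
      rw [hE]
      ring
  | succ a ih =>
      intro b c e k hab hbc hce hek y
      obtain ⟨b', rfl⟩ : ∃ b', b = b' + 1 := ⟨b - 1, by omega⟩
      obtain ⟨c', rfl⟩ : ∃ c', c = c' + 1 := ⟨c - 1, by omega⟩
      obtain ⟨e', rfl⟩ : ∃ e', e = e' + 1 := ⟨e - 1, by omega⟩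
      obtain ⟨t, rfl⟩ : ∃ t, k = t + 1 := ⟨k - 1, by omega⟩
      rw [show nestF d w m ρ (t + 1) (mk4 d w (a + 1) (b' + 1) (c' + 1) (e' + 1)) y
        = Pop d w m ρ
            (fun z => mk4 d w (a + 1) (b' + 1) (c' + 1) (e' + 1) (0 : Fin (t + 1)) z *
              nestF d w m ρ t
                (fun i => mk4 d w (a + 1) (b' + 1) (c' + 1) (e' + 1) i.succ) z) y
        from rfl]
      rw [mk4_succ]
      have hhead : mk4 d w (a + 1) (b' + 1) (c' + 1) (e' + 1) (0 : Fin (t + 1))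
          = (fun _ => (1:ℝ)) := by
        unfold mk4
        rw [if_neg (by simp)]
      rw [hhead]
      have harg : (fun z => (fun _ : (Fin w → Fin d) → Bool => (1:ℝ)) z *
            nestF d w m ρ t (mk4 d w a b' c' e') z)
          = (fun z => ((alphaAR d m ρ * qIsing d w ρ) ^ ((b' - a - 1) + (e' - c' - 1)) *
              (alphaAR d m ρ * alphaAR d m ρ *
                (((d:ℝ) * ρ) ^ w * ((d:ℝ) * ρ) ^ w * ((d:ℝ) * ρ) ^ w * ((d:ℝ) * ρ) ^ w))) *
              chi d w ρ z) :=
        funext fun z => by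
          show (1:ℝ) * nestF d w m ρ t (mk4 d w a b' c' e') z = _
          rw [ih b' c' e' t (by omega) (by omega) (by omega) (by omega) z]
          ring
      rw [harg, Pop_tchi hd hm hρ0 hρ1]
      have hE : (b' + 1 - (a + 1) - 1) + (e' + 1 - (c' + 1) - 1)
          = (b' - a - 1) + (e' - c' - 1) := by omega
      rw [hE]

end

end AR
namespace AR

open Finset

noncomputable section

variable {d w m : ℕ} {ρ : ℝ}

lemma main_general (hd : 2 ≤ d) (hm : 1 ≤ m) (hρ0 : 0 ≤ ρ) (hρ1 : ρ ≤ 1)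
    {n : ℕ} (a b c e : Fin n) (hab : a < b) (hbc : b < c) (hce : c < e) :
    ∑ Y : Fin n → ((Fin w → Fin d) → Bool), arWeight d w m n ρ Y *
        (blockSum d w (Y a) * blockSum d w (Y b) * blockSum d w (Y c) * blockSum d w (Y e))
      = alphaAR d m ρ ^ 2 *
          (alphaAR d m ρ * qIsing d w ρ) ^ ((e.val - c.val) + (b.val - a.val) - 2) *
          ((d:ℝ) * ρ) ^ (4 * w) := by
  have hab' : a.val < b.val := hab
  have hbc' : b.val < c.val := hbc
  have hce' : c.val < e.val := hce
  have he3 : 3 ≤ e.val := by omega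
  have hen : e.val < n := e.isLt
  obtain ⟨k, rfl⟩ : ∃ k, n = k + 1 := ⟨n - 1, by omega⟩
  have hek : e.val - 1 < k := by omega
  rw [← Equiv.sum_comp (Fin.consEquiv (fun _ : Fin (k + 1) => (Fin w → Fin d) → Bool))
      (fun Y => arWeight d w m (k + 1) ρ Y *
        (blockSum d w (Y a) * blockSum d w (Y b) * blockSum d w (Y c) * blockSum d w (Y e))),
    Fintype.sum_prod_type]
  have hW : ∀ (y0 : (Fin w → Fin d) → Bool) (Y' : Fin k → ((Fin w → Fin d) → Bool)),
      arWeight d w m (k + 1) ρ (Fin.cons (α := fun _ : Fin (k + 1) => (Fin w → Fin d) → Bool) y0 Y')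
        = leafW d w ρ y0 * chainW d w m ρ k y0 Y' := by
    intro y0 Y'
    rw [arWeight_eq]
    simp only [Fin.cons_zero, Fin.cons_succ]
  have hval : ∀ (y0 : (Fin w → Fin d) → Bool) (Y' : Fin k → ((Fin w → Fin d) → Bool))
      (j : Fin (k + 1)) (hj : 1 ≤ j.val),
      (Fin.cons (α := fun _ : Fin (k + 1) => (Fin w → Fin d) → Bool) y0 Y') j
        = Y' ⟨j.val - 1, by omega⟩ := by
    intro y0 Y' j hj
    have hjj : j = Fin.succ ⟨j.val - 1, by omega⟩ := Fin.ext (by simp only [Fin.val_succ]; omega)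
    conv_lhs => rw [hjj]
    rw [Fin.cons_succ]
  by_cases ha0 : a.val = 0
  · -- first marked block is the initial one
    have haeq : a = (0 : Fin (k + 1)) := Fin.ext (by simpa using ha0)
    have hA : ∀ (y0 : (Fin w → Fin d) → Bool) (Y' : Fin k → ((Fin w → Fin d) → Bool)),
        (Fin.cons (α := fun _ : Fin (k + 1) => (Fin w → Fin d) → Bool) y0 Y') a = y0 := by
      intro y0 Y'
      rw [haeq, Fin.cons_zero]
    calc (∑ y0 : (Fin w → Fin d) → Bool, ∑ Y' : Fin k → ((Fin w → Fin d) → Bool),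
          arWeight d w m (k + 1) ρ
              ((Fin.consEquiv (fun _ : Fin (k + 1) => (Fin w → Fin d) → Bool)) (y0, Y')) *
            (blockSum d w ((Fin.consEquiv (fun _ : Fin (k + 1) => (Fin w → Fin d) → Bool)) (y0, Y') a) *
              blockSum d w ((Fin.consEquiv (fun _ : Fin (k + 1) => (Fin w → Fin d) → Bool)) (y0, Y') b) *
              blockSum d w ((Fin.consEquiv (fun _ : Fin (k + 1) => (Fin w → Fin d) → Bool)) (y0, Y') c) *
              blockSum d w ((Fin.consEquiv (fun _ : Fin (k + 1) => (Fin w → Fin d) → Bool)) (y0, Y') e)))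
        = ∑ y0 : (Fin w → Fin d) → Bool, (leafW d w ρ y0 * blockSum d w y0) *
            ∑ Y' : Fin k → ((Fin w → Fin d) → Bool), chainW d w m ρ k y0 Y' *
              ∏ i : Fin k, mk3 d w (b.val - 1) (c.val - 1) (e.val - 1) i (Y' i) := by
          apply Finset.sum_congr rfl
          intro y0 _
          rw [Finset.mul_sum]
          apply Finset.sum_congr rfl
          intro Y' _
          show arWeight d w m (k + 1) ρ
              (Fin.cons (α := fun _ : Fin (k + 1) => (Fin w → Fin d) → Bool) y0 Y') *
            (blockSum d w (Fin.cons (α := fun _ : Fin (k + 1) => (Fin w → Fin d) → Bool) y0 Y' a) *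
              blockSum d w (Fin.cons (α := fun _ : Fin (k + 1) => (Fin w → Fin d) → Bool) y0 Y' b) *
              blockSum d w (Fin.cons (α := fun _ : Fin (k + 1) => (Fin w → Fin d) → Bool) y0 Y' c) *
              blockSum d w (Fin.cons (α := fun _ : Fin (k + 1) => (Fin w → Fin d) → Bool) y0 Y' e)) = _
          rw [hW, hA, hval y0 Y' b (by omega), hval y0 Y' c (by omega), hval y0 Y' e (by omega),
            prodMk3 (b.val - 1) (c.val - 1) (e.val - 1) (by omega) (by omega) hek Y']
          ring
      _ = ∑ y0 : (Fin w → Fin d) → Bool, (leafW d w ρ y0 * blockSum d w y0) *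
            (((alphaAR d m ρ * qIsing d w ρ) ^ ((b.val - 1) + ((e.val - 1) - (c.val - 1) - 1)) *
              (alphaAR d m ρ * alphaAR d m ρ *
                (((d:ℝ) * ρ) ^ w * ((d:ℝ) * ρ) ^ w * ((d:ℝ) * ρ) ^ w))) *
              rootPostMean d w ρ y0) := by
          apply Finset.sum_congr rfl
          intro y0 _
          rw [chain_eval k (mk3 d w (b.val - 1) (c.val - 1) (e.val - 1)) y0,
            NE3 hd hm hρ0 hρ1 (b.val - 1) (c.val - 1) (e.val - 1) k
              (by omega) (by omega) hek y0]
      _ = (((alphaAR d m ρ * qIsing d w ρ) ^ ((b.val - 1) + ((e.val - 1) - (c.val - 1) - 1)) *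
              (alphaAR d m ρ * alphaAR d m ρ *
                (((d:ℝ) * ρ) ^ w * ((d:ℝ) * ρ) ^ w * ((d:ℝ) * ρ) ^ w)))) *
            ∑ y0 : (Fin w → Fin d) → Bool,
              leafW d w ρ y0 * blockSum d w y0 * rootPostMean d w ρ y0 := by
          rw [Finset.mul_sum]
          apply Finset.sum_congr rfl
          intro y0 _
          ring
      _ = alphaAR d m ρ ^ 2 *
            (alphaAR d m ρ * qIsing d w ρ) ^ ((e.val - c.val) + (b.val - a.val) - 2) *
            ((d:ℝ) * ρ) ^ (4 * w) := by
          rw [sum_leafW_Z_R hρ0 hρ1]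
          have hE : (b.val - 1) + ((e.val - 1) - (c.val - 1) - 1)
              = (e.val - c.val) + (b.val - a.val) - 2 := by omega
          rw [hE, show (4 : ℕ) * w = w * 4 from Nat.mul_comm 4 w, pow_mul]
          ring
  · -- all four marked blocks are in the tail
    have ha1 : 1 ≤ a.val := by omega
    calc (∑ y0 : (Fin w → Fin d) → Bool, ∑ Y' : Fin k → ((Fin w → Fin d) → Bool),
          arWeight d w m (k + 1) ρ
              ((Fin.consEquiv (fun _ : Fin (k + 1) => (Fin w → Fin d) → Bool)) (y0, Y')) *
            (blockSum d w ((Fin.consEquiv (fun _ : Fin (k + 1) => (Fin w → Fin d) → Bool)) (y0, Y') a) *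
              blockSum d w ((Fin.consEquiv (fun _ : Fin (k + 1) => (Fin w → Fin d) → Bool)) (y0, Y') b) *
              blockSum d w ((Fin.consEquiv (fun _ : Fin (k + 1) => (Fin w → Fin d) → Bool)) (y0, Y') c) *
              blockSum d w ((Fin.consEquiv (fun _ : Fin (k + 1) => (Fin w → Fin d) → Bool)) (y0, Y') e)))
        = ∑ y0 : (Fin w → Fin d) → Bool, leafW d w ρ y0 *
            ∑ Y' : Fin k → ((Fin w → Fin d) → Bool), chainW d w m ρ k y0 Y' *
              ∏ i : Fin k, mk4 d w (a.val - 1) (b.val - 1) (c.val - 1) (e.val - 1) i (Y' i) := by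
          apply Finset.sum_congr rfl
          intro y0 _
          rw [Finset.mul_sum]
          apply Finset.sum_congr rfl
          intro Y' _
          show arWeight d w m (k + 1) ρ
              (Fin.cons (α := fun _ : Fin (k + 1) => (Fin w → Fin d) → Bool) y0 Y') *
            (blockSum d w (Fin.cons (α := fun _ : Fin (k + 1) => (Fin w → Fin d) → Bool) y0 Y' a) *
              blockSum d w (Fin.cons (α := fun _ : Fin (k + 1) => (Fin w → Fin d) → Bool) y0 Y' b) *
              blockSum d w (Fin.cons (α := fun _ : Fin (k + 1) => (Fin w → Fin d) → Bool) y0 Y' c) *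
              blockSum d w (Fin.cons (α := fun _ : Fin (k + 1) => (Fin w → Fin d) → Bool) y0 Y' e)) = _
          rw [hW, hval y0 Y' a (by omega), hval y0 Y' b (by omega), hval y0 Y' c (by omega),
            hval y0 Y' e (by omega),
            prodMk4 (a.val - 1) (b.val - 1) (c.val - 1) (e.val - 1)
              (by omega) (by omega) (by omega) hek Y']
          ring
      _ = ∑ y0 : (Fin w → Fin d) → Bool, leafW d w ρ y0 *
            (((alphaAR d m ρ * qIsing d w ρ) ^
                (((b.val - 1) - (a.val - 1) - 1) + ((e.val - 1) - (c.val - 1) - 1)) *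
              (alphaAR d m ρ * alphaAR d m ρ *
                (((d:ℝ) * ρ) ^ w * ((d:ℝ) * ρ) ^ w * ((d:ℝ) * ρ) ^ w * ((d:ℝ) * ρ) ^ w))) *
              chi d w ρ y0) := by
          apply Finset.sum_congr rfl
          intro y0 _
          rw [chain_eval k (mk4 d w (a.val - 1) (b.val - 1) (c.val - 1) (e.val - 1)) y0,
            NE4 hd hm hρ0 hρ1 (a.val - 1) (b.val - 1) (c.val - 1) (e.val - 1) k
              (by omega) (by omega) (by omega) hek y0]
      _ = (((alphaAR d m ρ * qIsing d w ρ) ^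
                (((b.val - 1) - (a.val - 1) - 1) + ((e.val - 1) - (c.val - 1) - 1)) *
              (alphaAR d m ρ * alphaAR d m ρ *
                (((d:ℝ) * ρ) ^ w * ((d:ℝ) * ρ) ^ w * ((d:ℝ) * ρ) ^ w * ((d:ℝ) * ρ) ^ w)))) *
            ∑ y0 : (Fin w → Fin d) → Bool, leafW d w ρ y0 * chi d w ρ y0 := by
          rw [Finset.mul_sum]
          apply Finset.sum_congr rfl
          intro y0 _
          ring
      _ = alphaAR d m ρ ^ 2 *
            (alphaAR d m ρ * qIsing d w ρ) ^ ((e.val - c.val) + (b.val - a.val) - 2) *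
            ((d:ℝ) * ρ) ^ (4 * w) := by
          rw [sum_leafW_chi]
          have hE : ((b.val - 1) - (a.val - 1) - 1) + ((e.val - 1) - (c.val - 1) - 1)
              = (e.val - c.val) + (b.val - a.val) - 2 := by omega
          rw [hE, show (4 : ℕ) * w = w * 4 from Nat.mul_comm 4 w, pow_mul]
          ring

end

end AR

/-- In the autoregressive Ising broadcast process with context depth `w`
on `T(d,h)`, for `a < b < c < e` the block sums satisfy
`E[Z_a Z_b Z_c Z_e] = α² (α q_w)^{(e-c)+(b-a)-2} (dρ)^{4w}`. -/
theorem statement14 (d h w : ℕ) (hd : 2 ≤ d) (hw : w ≤ h) (ρ : ℝ)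
    (hρ : ρ ∈ Set.Icc (0 : ℝ) 1) :
    ∀ a b c e : Fin (d ^ (h - w)), a < b → b < c → c < e →
      arExp d w (h - w) (d ^ (h - w)) ρ
          (fun Y => blockSum d w (Y a) * blockSum d w (Y b) *
            blockSum d w (Y c) * blockSum d w (Y e)) =
        alphaAR d (h - w) ρ ^ 2 *
          (alphaAR d (h - w) ρ * qIsing d w ρ) ^ ((e.val - c.val) + (b.val - a.val) - 2) *
          ((d : ℝ) * ρ) ^ (4 * w) := by
  intro a b c e hab hbc hce
  have hab' : a.val < b.val := hab
  have hbc' : b.val < c.val := hbc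
  have hce' : c.val < e.val := hce
  have hm : 1 ≤ h - w := by
    by_contra hm0
    have hmw : h - w = 0 := by omega
    have h1 : d ^ (h - w) = 1 := by rw [hmw]; exact pow_zero d
    have h2 : (e : ℕ) < 1 := lt_of_lt_of_eq e.isLt h1
    omega
  exact AR.main_general hd hm hρ.1 hρ.2 a b c e hab hbc hce
end

section
/- In the autoregressive Ising broadcast process with context depth w on T(d,h), for all indices i < j < k the block sums satisfy 0 ≤ E[Z_i Z_j² Z_k] ≤ α²·(α·q_w)^{(k−j)+(j−i)−2}·(dρ)^{2w}·M_{d,ρ,w}(2). -/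
open Finset

/-!
Conditioning on the two subtree roots shows that the transition `P` of the autoregressive chain
satisfies `π(y) P(y, y') = π(y) π(y') + α g(y) g(y')`, where `π` is the leaf law and
`g = π m` with `m(y) = E[X_root | leaves = y]`. Hence the signed measures `(u + v m) π` form a
two-dimensional family which one step of the chain, weighted by a test function `φ`, maps to
itself, with new coefficients `E_π[(u + v m) φ]` and `α E_π[m (u + v m) φ]`. By spin-flip symmetry
all odd moments vanish, so starting from `π` the chain picks up a factor `α (dρ)^w` at `Z_a`,
`α q_w` at every intermediate block, `α E_π[m² Z²]` at `Z_b²` and `(dρ)^w` at `Z_c`. This gives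
`E[Z_a Z_b² Z_c] = α² (α q_w)^{c-a-2} (dρ)^{2w} E_π[m² Z²]`, and `0 ≤ E_π[m² Z²] ≤ E_π[Z²] = M(2)`
because `m² ≤ 1`.
-/

noncomputable section

namespace TreeConfig

variable {d h : ℕ} {S : Type}

def snoc (τ : TreeConfig d h S) (L : (Fin (h + 1) → Fin d) → S) : TreeConfig d (h + 1) S :=
  Fin.lastCases (motive := fun ℓ : Fin (h + 2) => (Fin ℓ.val → Fin d) → S) L (fun j => τ j)

@[simp]
lemma snoc_castSucc (τ : TreeConfig d h S) (L : (Fin (h + 1) → Fin d) → S) (j : Fin (h + 1)) :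
    snoc τ L j.castSucc = τ j := by
  simp [snoc]

@[simp]
lemma snoc_last (τ : TreeConfig d h S) (L : (Fin (h + 1) → Fin d) → S) :
    snoc τ L (Fin.last (h + 1)) = L := by
  simp [snoc]

def snocEquiv : TreeConfig d h S × ((Fin (h + 1) → Fin d) → S) ≃ TreeConfig d (h + 1) S where
  toFun p := snoc p.1 p.2
  invFun σ := (fun j => σ j.castSucc, σ (Fin.last (h + 1)))
  left_inv p := by ext <;> simp
  right_inv σ := by
    funext ℓ
    induction ℓ using Fin.lastCases <;> simp

lemma sum_succ [Fintype S] (F : TreeConfig d (h + 1) S → ℝ) :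
    ∑ σ, F σ = ∑ τ : TreeConfig d h S, ∑ L, F (snoc τ L) := by
  rw [← Fintype.sum_prod_type']
  exact (Fintype.sum_equiv snocEquiv _ _ fun _ => rfl).symm

def ofRoot (r : S) : TreeConfig d 0 S := fun _ _ => r

def rootEquiv : TreeConfig d 0 S ≃ S where
  toFun := rootOf
  invFun := ofRoot
  left_inv σ := by
    funext ℓ f
    obtain rfl := Fin.fin_one_eq_zero ℓ
    exact congrArg (σ 0) (funext fun i => i.elim0)
  right_inv _ := rfl

lemma sum_zero [Fintype S] (F : TreeConfig d 0 S → ℝ) :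
    ∑ σ, F σ = ∑ r : S, F (ofRoot r) :=
  Fintype.sum_equiv rootEquiv _ _ fun σ => congrArg F (rootEquiv.left_inv σ).symm

end TreeConfig

section Broadcast

variable {d h : ℕ} {S : Type}

@[simp]
lemma rootOf_snoc (τ : TreeConfig d h S) (L : (Fin (h + 1) → Fin d) → S) :
    rootOf (τ.snoc L) = rootOf τ :=
  congrFun (TreeConfig.snoc_castSucc τ L 0) Fin.elim0

@[simp]
lemma leavesOf_snoc (τ : TreeConfig d h S) (L : (Fin (h + 1) → Fin d) → S) :
    leavesOf (τ.snoc L) = L :=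
  TreeConfig.snoc_last τ L

@[simp]
lemma rootOf_ofRoot (r : S) : rootOf (TreeConfig.ofRoot r : TreeConfig d 0 S) = r := rfl

@[simp]
lemma edgeProd_zero (W : S → S → ℝ) (σ : TreeConfig d 0 S) : edgeProd d 0 W σ = 1 := by
  simp [edgeProd]

lemma edgeProd_snoc (W : S → S → ℝ) (τ : TreeConfig d h S) (L : (Fin (h + 1) → Fin d) → S) :
    edgeProd d (h + 1) W (τ.snoc L)
      = edgeProd d h W τ * ∏ f, W (leavesOf τ fun i => f i.castSucc) (L f) := by
  rw [edgeProd, Fin.prod_univ_castSucc]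
  congr 1
  · exact Finset.prod_congr rfl fun j _ => Finset.prod_congr rfl fun f _ => congrArg₂ W
      (congrFun (TreeConfig.snoc_castSucc τ L ⟨j, by omega⟩) _)
      (congrFun (TreeConfig.snoc_castSucc τ L ⟨j + 1, by omega⟩) f)
  · exact Finset.prod_congr rfl fun f _ => congrArg₂ W
      (congrFun (TreeConfig.snoc_castSucc τ L (Fin.last h)) _) (congrFun (leavesOf_snoc τ L) f)

lemma edgeProd_nonneg {W : S → S → ℝ} (hW : ∀ a b, 0 ≤ W a b) (σ : TreeConfig d h S) :
    0 ≤ edgeProd d h W σ :=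
  Finset.prod_nonneg fun _ _ => Finset.prod_nonneg fun _ _ => hW _ _

lemma sum_pi_prod_eq_one {ι β : Type*} [Fintype ι] [DecidableEq ι] [Fintype β]
    (P : ι → β → ℝ) (hP : ∀ i, ∑ b, P i b = 1) :
    ∑ L : ι → β, ∏ i, P i (L i) = 1 := by
  rw [← Fintype.prod_sum]
  simp [hP]

lemma sum_pi_prod_mul_apply {ι β : Type*} [Fintype ι] [DecidableEq ι] [Fintype β]
    (P : ι → β → ℝ) (hP : ∀ i, ∑ b, P i b = 1) (i₀ : ι) (G : β → ℝ) :
    ∑ L : ι → β, (∏ i, P i (L i)) * G (L i₀) = ∑ b, P i₀ b * G b := by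
  have hsplit : ∀ L : ι → β, (∏ i, P i (L i)) * G (L i₀)
      = ∏ i, P i (L i) * (if i = i₀ then G (L i) else 1) := fun L => by
    rw [Finset.prod_mul_distrib, Fintype.prod_ite_eq']
  simp_rw [hsplit]
  rw [← Fintype.prod_sum fun i b => P i b * if i = i₀ then G b else 1,
    Fintype.prod_eq_single i₀ fun i hi => by simp [hi, hP]]
  simp

lemma sum_broadcastW [Fintype S] (ν : S → ℝ) {W : S → S → ℝ} (hW : ∀ a, ∑ b, W a b = 1) :
    ∀ h, ∑ σ : TreeConfig d h S, broadcastW d h ν W σ = ∑ r, ν r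
  | 0 => by simp [TreeConfig.sum_zero, broadcastW]
  | h + 1 => by
    simp_rw [TreeConfig.sum_succ, broadcastW, rootOf_snoc, edgeProd_snoc, ← mul_assoc,
      ← Finset.mul_sum, sum_pi_prod_eq_one _ fun _ => hW _, mul_one]
    exact sum_broadcastW ν hW h

end Broadcast

section Ising

@[simp]
lemma spinVal_mul_self (b : Bool) : spinVal b * spinVal b = 1 := by
  cases b <;> norm_num [spinVal]

@[simp]
lemma spinVal_not (b : Bool) : spinVal (!b) = -spinVal b := by
  cases b <;> norm_num [spinVal]

lemma abs_spinVal (b : Bool) : |spinVal b| = 1 := by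
  cases b <;> norm_num [spinVal]

lemma sum_isingEdge (ρ : ℝ) (a : Bool) : ∑ b, isingEdge ρ a b = 1 := by
  cases a <;> simp [isingEdge] <;> ring

lemma sum_isingEdge_mul_spinVal (ρ : ℝ) (a : Bool) :
    ∑ b, isingEdge ρ a b * spinVal b = ρ * spinVal a := by
  cases a <;> simp [isingEdge, spinVal] <;> ring

lemma isingEdge_nonneg {ρ : ℝ} (hρ : ρ ∈ Set.Icc (-1 : ℝ) 1) (a b : Bool) :
    0 ≤ isingEdge ρ a b := by
  obtain ⟨h₁, h₂⟩ := hρ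
  unfold isingEdge
  split <;> linarith

variable {d h : ℕ} {ρ : ℝ}

lemma isingW_snoc (τ : TreeConfig d h Bool) (L : (Fin (h + 1) → Fin d) → Bool) :
    isingW d (h + 1) ρ (τ.snoc L)
      = isingW d h ρ τ * ∏ f, isingEdge ρ (leavesOf τ fun i => f i.castSucc) (L f) := by
  simp only [isingW, broadcastW, edgeProd_snoc, mul_assoc]

lemma sum_isingW (h : ℕ) : ∑ σ : TreeConfig d h Bool, isingW d h ρ σ = 1 := by
  refine (sum_broadcastW (fun _ => 1 / 2) (sum_isingEdge ρ) h).trans ?_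
  norm_num

lemma isingExp_spinVal_root_mul_leaf : ∀ {h : ℕ} (f : Fin h → Fin d),
    isingExp d h ρ (fun σ => spinVal (rootOf σ) * spinVal (leavesOf σ f)) = ρ ^ h
  | 0, f => by
    have hleaf (σ : TreeConfig d 0 Bool) : leavesOf σ f = rootOf σ :=
      congrArg (σ 0) (funext fun i => i.elim0)
    simp [isingExp, hleaf, sum_isingW]
  | h + 1, f => by
    have hlast (τ : TreeConfig d h Bool) :
        ∑ L : (Fin (h + 1) → Fin d) → Bool,
            (∏ f', isingEdge ρ (leavesOf τ fun i => f' i.castSucc) (L f')) * spinVal (L f)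
          = ρ * spinVal (leavesOf τ fun i => f i.castSucc) := by
      rw [sum_pi_prod_mul_apply _ (fun _ => sum_isingEdge ρ _), sum_isingEdge_mul_spinVal]
    calc isingExp d (h + 1) ρ (fun σ => spinVal (rootOf σ) * spinVal (leavesOf σ f))
        = ρ * isingExp d h ρ
            (fun τ => spinVal (rootOf τ) * spinVal (leavesOf τ fun i => f i.castSucc)) := by
          simp_rw [isingExp, TreeConfig.sum_succ, isingW_snoc, rootOf_snoc, leavesOf_snoc,
            Finset.mul_sum]
          refine Finset.sum_congr rfl fun τ _ => ?_
          rw [mul_left_comm, mul_left_comm ρ, ← hlast, Finset.mul_sum, Finset.mul_sum]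
          exact Finset.sum_congr rfl fun L _ => by ring
      _ = ρ ^ (h + 1) := by rw [isingExp_spinVal_root_mul_leaf, pow_succ']

end Ising

lemma sum_ite_fiber_mul {α β : Type*} [Fintype α] [Fintype β] [DecidableEq β]
    (f : α → β) (F : α → ℝ) (G : β → ℝ) :
    ∑ y, (∑ x, if f x = y then F x else 0) * G y = ∑ x, F x * G (f x) := by
  simp_rw [Finset.sum_mul, ite_mul, zero_mul]
  rw [Finset.sum_comm]
  refine Finset.sum_congr rfl fun x _ => ?_
  rw [Finset.sum_ite_eq]
  simp

abbrev LeafConfig (d w : ℕ) := (Fin w → Fin d) → Bool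

def flipLeaves {d w : ℕ} (y : LeafConfig d w) : LeafConfig d w := fun f => !y f

def flipTree {d h : ℕ} (σ : TreeConfig d h Bool) : TreeConfig d h Bool :=
  fun ℓ f => !σ ℓ f

section Symmetry

variable {d w : ℕ} {ρ : ℝ}

lemma flipLeaves_involutive : Function.Involutive (flipLeaves (d := d) (w := w)) :=
  fun y => funext fun f => Bool.not_not (y f)

lemma flipTree_involutive : Function.Involutive (flipTree (d := d) (h := w)) :=
  fun σ => funext fun ℓ => funext fun f => Bool.not_not (σ ℓ f)

@[simp]
lemma rootOf_flipTree (σ : TreeConfig d w Bool) : rootOf (flipTree σ) = !rootOf σ := rfl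

@[simp]
lemma leavesOf_flipTree (σ : TreeConfig d w Bool) :
    leavesOf (flipTree σ) = flipLeaves (leavesOf σ) :=
  rfl

lemma edgeProd_flipTree (σ : TreeConfig d w Bool) :
    edgeProd d w (isingEdge ρ) (flipTree σ) = edgeProd d w (isingEdge ρ) σ := by
  unfold edgeProd flipTree isingEdge
  simp

lemma isingW_flipTree (σ : TreeConfig d w Bool) : isingW d w ρ (flipTree σ) = isingW d w ρ σ := by
  simp only [isingW, broadcastW, edgeProd_flipTree]

lemma isingWRooted_flipTree (r : Bool) (σ : TreeConfig d w Bool) :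
    isingWRooted d w ρ r (flipTree σ) = isingWRooted d w ρ (!r) σ := by
  simp only [isingWRooted, edgeProd_flipTree, rootOf_flipTree]
  congr 1
  cases r <;> simp

lemma blockSum_flipLeaves (y : LeafConfig d w) : blockSum d w (flipLeaves y) = -blockSum d w y := by
  simp [blockSum, flipLeaves]

lemma leafSum_flipTree (σ : TreeConfig d w Bool) : leafSum d w (flipTree σ) = -leafSum d w σ :=
  blockSum_flipLeaves (leavesOf σ)

lemma sum_flipTree (F : TreeConfig d w Bool → ℝ) : ∑ σ, F (flipTree σ) = ∑ σ, F σ :=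
  Fintype.sum_equiv flipTree_involutive.toPerm _ _ fun _ => rfl

lemma sum_flipLeaves (F : LeafConfig d w → ℝ) : ∑ y, F (flipLeaves y) = ∑ y, F y :=
  Fintype.sum_equiv flipLeaves_involutive.toPerm _ _ fun _ => rfl

lemma sum_eq_zero_of_flipLeaves_eq_neg {F : LeafConfig d w → ℝ}
    (hF : ∀ y, F (flipLeaves y) = -F y) :
    ∑ y, F y = 0 := by
  have h := sum_flipLeaves F
  simp only [hF, Finset.sum_neg_distrib] at h
  linarith

end Symmetry

def leafRootSpinW (d w : ℕ) (ρ : ℝ) (y : LeafConfig d w) : ℝ :=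
  ∑ σ : TreeConfig d w Bool, if leavesOf σ = y then isingW d w ρ σ * spinVal (rootOf σ) else 0

def leafExp (d w : ℕ) (ρ : ℝ) (φ : LeafConfig d w → ℝ) : ℝ :=
  ∑ y, leafW d w ρ y * φ y

section LeafMarginal

variable {d w : ℕ} {ρ : ℝ}

lemma leafExp_eq_isingExp (φ : LeafConfig d w → ℝ) :
    leafExp d w ρ φ = isingExp d w ρ fun σ => φ (leavesOf σ) :=
  sum_ite_fiber_mul _ _ _

lemma sum_leafRootSpinW_mul (φ : LeafConfig d w → ℝ) :
    ∑ y, leafRootSpinW d w ρ y * φ y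
      = isingExp d w ρ fun σ => spinVal (rootOf σ) * φ (leavesOf σ) :=
  (sum_ite_fiber_mul _ _ _).trans (Finset.sum_congr rfl fun _ _ => mul_assoc _ _ _)

lemma leafW_flipLeaves (y : LeafConfig d w) : leafW d w ρ (flipLeaves y) = leafW d w ρ y := by
  rw [leafW, ← sum_flipTree]
  simp only [leavesOf_flipTree, flipLeaves_involutive.injective.eq_iff, isingW_flipTree]
  rfl

lemma leafRootSpinW_flipLeaves (y : LeafConfig d w) :
    leafRootSpinW d w ρ (flipLeaves y) = -leafRootSpinW d w ρ y := by
  rw [leafRootSpinW, ← sum_flipTree, leafRootSpinW, ← Finset.sum_neg_distrib]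
  simp only [leavesOf_flipTree, flipLeaves_involutive.injective.eq_iff, isingW_flipTree,
    rootOf_flipTree, spinVal_not, mul_neg, neg_ite, neg_zero]

lemma rootPostMean_eq_div (y : LeafConfig d w) :
    rootPostMean d w ρ y = leafRootSpinW d w ρ y / leafW d w ρ y :=
  rfl

lemma rootPostMean_flipLeaves (y : LeafConfig d w) :
    rootPostMean d w ρ (flipLeaves y) = -rootPostMean d w ρ y := by
  rw [rootPostMean_eq_div, rootPostMean_eq_div, leafRootSpinW_flipLeaves, leafW_flipLeaves, neg_div]

lemma isingWRooted_add (σ : TreeConfig d w Bool) :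
    isingWRooted d w ρ true σ + isingWRooted d w ρ false σ = 2 * isingW d w ρ σ := by
  simp only [isingWRooted, isingW, broadcastW]
  cases rootOf σ <;> norm_num <;> ring

lemma isingWRooted_sub (σ : TreeConfig d w Bool) :
    isingWRooted d w ρ true σ - isingWRooted d w ρ false σ
      = 2 * (isingW d w ρ σ * spinVal (rootOf σ)) := by
  simp only [isingWRooted, isingW, broadcastW]
  cases rootOf σ <;> norm_num [spinVal] <;> ring

lemma leafWRooted_add (y : LeafConfig d w) :
    leafWRooted d w ρ true y + leafWRooted d w ρ false y = 2 * leafW d w ρ y := by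
  rw [leafWRooted, leafWRooted, leafW, ← Finset.sum_add_distrib, Finset.mul_sum]
  refine Finset.sum_congr rfl fun σ _ => ?_
  split_ifs
  · exact isingWRooted_add σ
  · ring

lemma leafWRooted_sub (y : LeafConfig d w) :
    leafWRooted d w ρ true y - leafWRooted d w ρ false y = 2 * leafRootSpinW d w ρ y := by
  rw [leafWRooted, leafWRooted, leafRootSpinW, ← Finset.sum_sub_distrib, Finset.mul_sum]
  refine Finset.sum_congr rfl fun σ _ => ?_
  split_ifs
  · exact isingWRooted_sub σ
  · ring

section Nonneg

variable (hρ : ρ ∈ Set.Icc (-1 : ℝ) 1)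
include hρ

lemma isingW_nonneg (σ : TreeConfig d w Bool) : 0 ≤ isingW d w ρ σ :=
  mul_nonneg (by norm_num) (edgeProd_nonneg (isingEdge_nonneg hρ) σ)

lemma leafW_nonneg (y : LeafConfig d w) : 0 ≤ leafW d w ρ y :=
  Finset.sum_nonneg fun σ _ => by
    split_ifs
    exacts [isingW_nonneg hρ σ, le_rfl]

lemma abs_leafRootSpinW_le (y : LeafConfig d w) : |leafRootSpinW d w ρ y| ≤ leafW d w ρ y := by
  refine (Finset.abs_sum_le_sum_abs _ _).trans (Finset.sum_le_sum fun σ _ => ?_)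
  split_ifs
  · rw [abs_mul, abs_spinVal, mul_one, abs_of_nonneg (isingW_nonneg hρ σ)]
  · simp

lemma leafW_mul_rootPostMean (y : LeafConfig d w) :
    leafW d w ρ y * rootPostMean d w ρ y = leafRootSpinW d w ρ y := by
  rw [rootPostMean_eq_div]
  by_cases h₀ : leafW d w ρ y = 0
  · have := abs_leafRootSpinW_le hρ y
    rw [h₀] at this ⊢
    rw [zero_mul, abs_nonpos_iff.mp this]
  · field_simp

lemma rootPostMean_sq_le_one (y : LeafConfig d w) : rootPostMean d w ρ y ^ 2 ≤ 1 := by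
  rw [rootPostMean_eq_div, div_pow, ← sq_abs]
  exact div_le_one_of_le₀ (pow_le_pow_left₀ (abs_nonneg _) (abs_leafRootSpinW_le hρ y) 2)
    (sq_nonneg _)

end Nonneg

end LeafMarginal

section LeafMoments

variable {d w : ℕ} {ρ : ℝ}

lemma leafExp_one : leafExp d w ρ (fun _ => 1) = 1 := by
  simp [leafExp_eq_isingExp, isingExp, sum_isingW]

lemma leafExp_eq_zero_of_odd {φ : LeafConfig d w → ℝ} (hφ : ∀ y, φ (flipLeaves y) = -φ y) :
    leafExp d w ρ φ = 0 :=
  sum_eq_zero_of_flipLeaves_eq_neg fun y => by rw [leafW_flipLeaves, hφ, mul_neg]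

lemma isingExp_leafSum_sq : isingExp d w ρ (fun σ => leafSum d w σ ^ 2) = isingMoment d w ρ 2 := by
  have hfalse : ∑ σ, isingWRooted d w ρ false σ * leafSum d w σ ^ 2 = isingMoment d w ρ 2 := by
    rw [isingMoment, ← sum_flipTree]
    simp only [isingWRooted_flipTree, Bool.not_false, leafSum_flipTree, neg_sq]
  calc isingExp d w ρ (fun σ => leafSum d w σ ^ 2)
      = (isingMoment d w ρ 2 + ∑ σ, isingWRooted d w ρ false σ * leafSum d w σ ^ 2) / 2 := by
        rw [isingMoment, ← Finset.sum_add_distrib, Finset.sum_div, isingExp]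
        refine Finset.sum_congr rfl fun σ _ => ?_
        rw [← add_mul, isingWRooted_add]
        ring
    _ = isingMoment d w ρ 2 := by rw [hfalse]; ring

lemma leafExp_blockSum_sq : leafExp d w ρ (fun y => blockSum d w y ^ 2) = isingMoment d w ρ 2 :=
  (leafExp_eq_isingExp _).trans isingExp_leafSum_sq

variable (hρ : ρ ∈ Set.Icc (-1 : ℝ) 1)
include hρ

lemma leafExp_rootPostMean_mul (φ : LeafConfig d w → ℝ) :
    leafExp d w ρ (fun y => rootPostMean d w ρ y * φ y)
      = isingExp d w ρ fun σ => spinVal (rootOf σ) * φ (leavesOf σ) := by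
  simp_rw [leafExp, ← mul_assoc, leafW_mul_rootPostMean hρ, sum_leafRootSpinW_mul]

lemma leafExp_rootPostMean_mul_blockSum :
    leafExp d w ρ (fun y => rootPostMean d w ρ y * blockSum d w y) = ((d : ℝ) * ρ) ^ w := by
  rw [leafExp_rootPostMean_mul hρ]
  simp_rw [isingExp, blockSum, Finset.mul_sum]
  rw [Finset.sum_comm]
  calc ∑ f : Fin w → Fin d, isingExp d w ρ (fun σ => spinVal (rootOf σ) * spinVal (leavesOf σ f))
      = ∑ _f : Fin w → Fin d, ρ ^ w :=
        Finset.sum_congr rfl fun f _ => isingExp_spinVal_root_mul_leaf f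
    _ = ((d : ℝ) * ρ) ^ w := by simp [mul_pow]

end LeafMoments

section LcaLaw

variable {d m : ℕ}

lemma sum_Icc_pow_sub (x : ℝ) (m : ℕ) :
    ∑ s ∈ Finset.Icc 1 m, x ^ (m - s) = ∑ j ∈ Finset.range m, x ^ j := by
  rw [← Finset.Ico_add_one_right_eq_Icc, Finset.sum_Ico_eq_sum_range, Nat.add_sub_cancel,
    ← Finset.sum_range_reflect (fun j => x ^ j)]
  simp only [Nat.sub_sub]

lemma sum_lcaLaw (hd : 2 ≤ d) (hm : 1 ≤ m) : ∑ s ∈ Finset.Icc 1 m, lcaLaw d m s = 1 := by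
  have hpow : (1 : ℝ) < (d : ℝ) ^ m := one_lt_pow₀ (by exact_mod_cast hd) (by omega)
  unfold lcaLaw
  rw [Finset.sum_congr rfl fun s hs => if_pos (Finset.mem_Icc.mp hs), ← Finset.sum_div,
    ← Finset.mul_sum, sum_Icc_pow_sub, mul_comm, geom_sum_mul, div_self (by linarith)]

lemma lcaLaw_nonneg (hd : 2 ≤ d) (s : ℕ) : 0 ≤ lcaLaw d m s := by
  have hd' : (2 : ℝ) ≤ d := by exact_mod_cast hd
  unfold lcaLaw
  split_ifs with hs
  · have hpow : (1 : ℝ) ≤ (d : ℝ) ^ m := one_le_pow₀ (by linarith)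
    exact div_nonneg (mul_nonneg (by linarith) (by positivity)) (by linarith)
  · exact le_rfl

lemma alphaAR_nonneg (hd : 2 ≤ d) (ρ : ℝ) : 0 ≤ alphaAR d m ρ :=
  Finset.sum_nonneg fun s _ => mul_nonneg (lcaLaw_nonneg hd s) (by rw [pow_mul]; positivity)

end LcaLaw

section Transition

variable {d w m : ℕ} {ρ : ℝ}

lemma sum_pairRootW_mul (s : ℕ) (y y' : LeafConfig d w) :
    ∑ r, ∑ r', pairRootW ρ s r r' * leafWRooted d w ρ r y * leafWRooted d w ρ r' y'
      = leafW d w ρ y * leafW d w ρ y'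
        + ρ ^ (2 * s) * leafRootSpinW d w ρ y * leafRootSpinW d w ρ y' := by
  have hroot (y : LeafConfig d w) :
      leafWRooted d w ρ true y = leafW d w ρ y + leafRootSpinW d w ρ y ∧
        leafWRooted d w ρ false y = leafW d w ρ y - leafRootSpinW d w ρ y :=
    ⟨by linarith [leafWRooted_add (ρ := ρ) y, leafWRooted_sub (ρ := ρ) y],
      by linarith [leafWRooted_add (ρ := ρ) y, leafWRooted_sub (ρ := ρ) y]⟩
  simp only [Fintype.sum_bool, pairRootW, spinVal, if_true, Bool.false_eq_true, if_false,
    (hroot y).1, (hroot y).2, (hroot y').1, (hroot y').2]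
  ring

lemma leafW_mul_arStep (hd : 2 ≤ d) (hm : 1 ≤ m) (hρ : ρ ∈ Set.Icc (-1 : ℝ) 1)
    (y y' : LeafConfig d w) :
    leafW d w ρ y * arStep d w m ρ y y'
      = leafW d w ρ y * leafW d w ρ y'
        + alphaAR d m ρ * leafRootSpinW d w ρ y * leafRootSpinW d w ρ y' := by
  by_cases h₀ : leafW d w ρ y = 0
  · have hg : leafRootSpinW d w ρ y = 0 := by
      rw [← leafW_mul_rootPostMean hρ y, h₀, zero_mul]
    simp [h₀, hg]
  · have hterm (s : ℕ) : leafW d w ρ y * (lcaLaw d m s *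
          ((∑ r, ∑ r', pairRootW ρ s r r' * leafWRooted d w ρ r y * leafWRooted d w ρ r' y')
            / leafW d w ρ y))
        = lcaLaw d m s * (leafW d w ρ y * leafW d w ρ y')
          + lcaLaw d m s * ρ ^ (2 * s) * (leafRootSpinW d w ρ y * leafRootSpinW d w ρ y') := by
      rw [sum_pairRootW_mul]
      field_simp
    rw [arStep, Finset.mul_sum, Finset.sum_congr rfl fun s _ => hterm s, Finset.sum_add_distrib,
      ← Finset.sum_mul, ← Finset.sum_mul, sum_lcaLaw hd hm, alphaAR]
    ring

end Transition

section MarkovChain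

variable {α : Type*} [Fintype α] (K : α → α → ℝ)

def chainExp (μ : α → ℝ) (n : ℕ) (φ : ℕ → α → ℝ) : ℝ :=
  ∑ Y : Fin (n + 1) → α,
    μ (Y 0) * (∏ i : Fin n, K (Y i.castSucc) (Y i.succ)) * ∏ i : Fin (n + 1), φ i (Y i)

def pushWeighted (φ μ : α → ℝ) (y' : α) : ℝ :=
  ∑ y, μ y * φ y * K y y'

lemma chainExp_zero (μ : α → ℝ) (φ : ℕ → α → ℝ) : chainExp K μ 0 φ = ∑ y, μ y * φ 0 y :=
  Fintype.sum_equiv (Equiv.funUnique (Fin 1) α) _ _ fun Y => by simp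

lemma chainExp_succ (μ : α → ℝ) (n : ℕ) (φ : ℕ → α → ℝ) :
    chainExp K μ (n + 1) φ = chainExp K (pushWeighted K (φ 0) μ) n fun i => φ (i + 1) := by
  rw [chainExp, ← (Fin.consEquiv fun _ => α).sum_comp, Fintype.sum_prod_type, Finset.sum_comm]
  refine Finset.sum_congr rfl fun Y _ => ?_
  simp only [Fin.consEquiv_apply, pushWeighted, Finset.sum_mul]
  refine Finset.sum_congr rfl fun y _ => ?_
  simp only [Fin.prod_univ_succ (n := n), Fin.prod_univ_succ (n := n + 1), Fin.cons_zero,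
    Fin.cons_succ, Fin.castSucc_zero, ← Fin.succ_castSucc, Fin.val_succ, Fin.val_zero]
  ring

end MarkovChain

def mixW (d w : ℕ) (ρ : ℝ) (p : ℝ × ℝ) (y : LeafConfig d w) : ℝ :=
  (p.1 + p.2 * rootPostMean d w ρ y) * leafW d w ρ y

def mixStep (d w m : ℕ) (ρ : ℝ) (φ : LeafConfig d w → ℝ) (p : ℝ × ℝ) : ℝ × ℝ :=
  (leafExp d w ρ (fun y => (p.1 + p.2 * rootPostMean d w ρ y) * φ y),
    alphaAR d m ρ *
      leafExp d w ρ (fun y => (p.1 + p.2 * rootPostMean d w ρ y) * (rootPostMean d w ρ y * φ y)))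

def postMeanBlockMoment (d w : ℕ) (ρ : ℝ) : ℝ :=
  leafExp d w ρ fun y => rootPostMean d w ρ y ^ 2 * blockSum d w y ^ 2

section MixtureChain

variable {d w m : ℕ} {ρ : ℝ}

lemma leafExp_affine_mul (u v : ℝ) (f φ : LeafConfig d w → ℝ) :
    leafExp d w ρ (fun y => (u + v * f y) * φ y)
      = u * leafExp d w ρ φ + v * leafExp d w ρ (fun y => f y * φ y) := by
  simp only [leafExp, Finset.mul_sum, ← Finset.sum_add_distrib]
  exact Finset.sum_congr rfl fun y _ => by ring

lemma mixW_one_zero : mixW d w ρ (1, 0) = leafW d w ρ := by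
  funext y
  simp [mixW]

section
variable (hd : 2 ≤ d) (hm : 1 ≤ m) (hρ : ρ ∈ Set.Icc (-1 : ℝ) 1)
include hd hm hρ

lemma pushWeighted_mixW (φ : LeafConfig d w → ℝ) (p : ℝ × ℝ) :
    pushWeighted (arStep d w m ρ) φ (mixW d w ρ p) = mixW d w ρ (mixStep d w m ρ φ p) := by
  funext y'
  have hterm (y : LeafConfig d w) :
      mixW d w ρ p y * φ y * arStep d w m ρ y y'
        = leafW d w ρ y' * (leafW d w ρ y * ((p.1 + p.2 * rootPostMean d w ρ y) * φ y))
          + alphaAR d m ρ * rootPostMean d w ρ y' * leafW d w ρ y'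
            * (leafW d w ρ y * ((p.1 + p.2 * rootPostMean d w ρ y)
              * (rootPostMean d w ρ y * φ y))) := by
    calc mixW d w ρ p y * φ y * arStep d w m ρ y y'
        = (p.1 + p.2 * rootPostMean d w ρ y) * φ y * (leafW d w ρ y * arStep d w m ρ y y') := by
          rw [mixW]; ring
      _ = _ := by
          rw [leafW_mul_arStep hd hm hρ, ← leafW_mul_rootPostMean hρ y,
            ← leafW_mul_rootPostMean hρ y']
          ring
  simp only [pushWeighted, hterm, Finset.sum_add_distrib, ← Finset.mul_sum]
  rw [mixW, mixStep, leafExp, leafExp]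
  ring

lemma chainExp_mixW_succ (p : ℝ × ℝ) (n : ℕ) (φ : ℕ → LeafConfig d w → ℝ) :
    chainExp (arStep d w m ρ) (mixW d w ρ p) (n + 1) φ
      = chainExp (arStep d w m ρ) (mixW d w ρ (mixStep d w m ρ (φ 0) p)) n
          fun i => φ (i + 1) := by
  rw [chainExp_succ, pushWeighted_mixW hd hm hρ]

end

lemma chainExp_mixW_zero (p : ℝ × ℝ) (φ : ℕ → LeafConfig d w → ℝ) :
    chainExp (arStep d w m ρ) (mixW d w ρ p) 0 φ = (mixStep d w m ρ (φ 0) p).1 := by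
  rw [chainExp_zero, mixStep, leafExp]
  exact Finset.sum_congr rfl fun y _ => by rw [mixW]; ring

lemma mixStep_one (u v : ℝ) :
    mixStep d w m ρ (fun _ => 1) (u, v) = (u, alphaAR d m ρ * qIsing d w ρ * v) := by
  have hodd : leafExp d w ρ (fun y => rootPostMean d w ρ y * 1) = 0 :=
    leafExp_eq_zero_of_odd fun y => by rw [rootPostMean_flipLeaves, neg_mul]
  have hq : leafExp d w ρ (fun y => rootPostMean d w ρ y * (rootPostMean d w ρ y * 1))
      = qIsing d w ρ := by
    simp only [mul_one, ← sq]
    rfl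
  simp only [mixStep, leafExp_affine_mul, hodd, hq, leafExp_one, Prod.mk.injEq]
  constructor <;> ring

lemma mixStep_blockSum (hρ : ρ ∈ Set.Icc (-1 : ℝ) 1) (u v : ℝ) :
    mixStep d w m ρ (blockSum d w) (u, v)
      = (((d : ℝ) * ρ) ^ w * v, alphaAR d m ρ * ((d : ℝ) * ρ) ^ w * u) := by
  have hZ : leafExp d w ρ (blockSum d w) = 0 :=
    leafExp_eq_zero_of_odd blockSum_flipLeaves
  have hmmZ : leafExp d w ρ
      (fun y => rootPostMean d w ρ y * (rootPostMean d w ρ y * blockSum d w y)) = 0 :=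
    leafExp_eq_zero_of_odd fun y => by rw [rootPostMean_flipLeaves, blockSum_flipLeaves]; ring
  simp only [mixStep, leafExp_affine_mul, hZ, hmmZ, leafExp_rootPostMean_mul_blockSum hρ,
    Prod.mk.injEq]
  constructor <;> ring

lemma mixStep_blockSum_sq (u v : ℝ) :
    mixStep d w m ρ (fun y => blockSum d w y ^ 2) (u, v)
      = (isingMoment d w ρ 2 * u, alphaAR d m ρ * postMeanBlockMoment d w ρ * v) := by
  have hmZZ : leafExp d w ρ (fun y => rootPostMean d w ρ y * blockSum d w y ^ 2) = 0 :=
    leafExp_eq_zero_of_odd fun y => by rw [rootPostMean_flipLeaves, blockSum_flipLeaves]; ring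
  have hγ : leafExp d w ρ
      (fun y => rootPostMean d w ρ y * (rootPostMean d w ρ y * blockSum d w y ^ 2))
        = postMeanBlockMoment d w ρ := by
    simp only [← mul_assoc, ← sq]
    rfl
  simp only [mixStep, leafExp_affine_mul, hmZZ, hγ, leafExp_blockSum_sq, Prod.mk.injEq]
  constructor <;> ring

section
variable (hd : 2 ≤ d) (hm : 1 ≤ m) (hρ : ρ ∈ Set.Icc (-1 : ℝ) 1)
include hd hm hρ

lemma chainExp_mixW_of_eq_one {k : ℕ} {φ : ℕ → LeafConfig d w → ℝ}
    (hφ : ∀ i < k, φ i = fun _ => 1) (u v : ℝ) (n : ℕ) :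
    chainExp (arStep d w m ρ) (mixW d w ρ (u, v)) (n + k) φ
      = chainExp (arStep d w m ρ) (mixW d w ρ (u, (alphaAR d m ρ * qIsing d w ρ) ^ k * v)) n
          fun i => φ (i + k) := by
  induction k generalizing φ v with
  | zero => simp
  | succ k ih =>
    rw [← add_assoc, chainExp_mixW_succ hd hm hρ, hφ 0 (by omega), mixStep_one,
      ih fun i hi => hφ (i + 1) (by omega)]
    simp only [add_assoc, pow_succ, mul_assoc]

lemma chainExp_mixW_of_eq_one_succ {k : ℕ} {φ : ℕ → LeafConfig d w → ℝ}
    (hφ : ∀ i < k, φ i = fun _ => 1) (u v : ℝ) (n : ℕ) :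
    chainExp (arStep d w m ρ) (mixW d w ρ (u, v)) (n + k + 1) φ
      = chainExp (arStep d w m ρ)
          (mixW d w ρ (mixStep d w m ρ (φ k) (u, (alphaAR d m ρ * qIsing d w ρ) ^ k * v))) n
          fun i => φ (i + k + 1) := by
  rw [add_right_comm, chainExp_mixW_of_eq_one hd hm hρ hφ, chainExp_mixW_succ hd hm hρ]
  simp only [zero_add, add_right_comm _ 1 k]

lemma chainExp_mixW_of_forall_eq_one {n : ℕ} {φ : ℕ → LeafConfig d w → ℝ}
    (hφ : ∀ i ≤ n, φ i = fun _ => 1) (p : ℝ × ℝ) :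
    chainExp (arStep d w m ρ) (mixW d w ρ p) n φ = p.1 := by
  rw [← zero_add n, chainExp_mixW_of_eq_one hd hm hρ (fun i hi => hφ i hi.le),
    chainExp_mixW_zero, zero_add, hφ n le_rfl, mixStep_one]

lemma chainExp_mixW_of_pos_eq_one {n : ℕ} {φ : ℕ → LeafConfig d w → ℝ}
    (hφ : ∀ i, 0 < i → i ≤ n → φ i = fun _ => 1) (p : ℝ × ℝ) :
    chainExp (arStep d w m ρ) (mixW d w ρ p) n φ = (mixStep d w m ρ (φ 0) p).1 := by
  cases n with
  | zero => exact chainExp_mixW_zero p φ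
  | succ n =>
    rw [chainExp_mixW_succ hd hm hρ,
      chainExp_mixW_of_forall_eq_one hd hm hρ fun i hi => hφ (i + 1) (by omega) (by omega)]

end

end MixtureChain

def blockTest (d w : ℕ) (a b c i : ℕ) : LeafConfig d w → ℝ :=
  if i = a then blockSum d w
  else if i = b then fun y => blockSum d w y ^ 2
  else if i = c then blockSum d w
  else fun _ => 1

section BlockTest

variable {d w : ℕ} {a b c i : ℕ}

lemma blockTest_of_eq_left (h : i = a) : blockTest d w a b c i = blockSum d w := by
  simp [blockTest, h]

lemma blockTest_of_eq_mid (h : i = b) (hab : a < b) :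
    blockTest d w a b c i = fun y => blockSum d w y ^ 2 := by
  simp [blockTest, h, hab.ne']

lemma blockTest_of_eq_right (h : i = c) (hac : a < c) (hbc : b < c) :
    blockTest d w a b c i = blockSum d w := by
  simp [blockTest, h, hac.ne', hbc.ne']

lemma blockTest_of_ne (ha : i ≠ a) (hb : i ≠ b) (hc : i ≠ c) :
    blockTest d w a b c i = fun _ => 1 := by
  simp [blockTest, ha, hb, hc]

lemma prod_blockTest {n : ℕ} {a b c : Fin n} (hab : a < b) (hbc : b < c)
    (Y : Fin n → LeafConfig d w) :
    ∏ i : Fin n, blockTest d w a b c i (Y i)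
      = blockSum d w (Y a) * blockSum d w (Y b) ^ 2 * blockSum d w (Y c) := by
  have hsplit (i : Fin n) : blockTest d w a b c i (Y i)
      = (if i = a then blockSum d w (Y i) else 1) * (if i = b then blockSum d w (Y i) ^ 2 else 1)
        * (if i = c then blockSum d w (Y i) else 1) := by
    have hne : a ≠ b ∧ b ≠ c ∧ a ≠ c := ⟨hab.ne, hbc.ne, (hab.trans hbc).ne⟩
    simp only [blockTest, Fin.val_inj]
    split_ifs <;> simp_all
  simp only [hsplit, Finset.prod_mul_distrib, Fintype.prod_ite_eq']

end BlockTest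

section Evaluation

variable {d w m : ℕ} {ρ : ℝ}

lemma arExp_prod_eq_chainExp (N : ℕ) (φ : ℕ → LeafConfig d w → ℝ) :
    arExp d w m (N + 1) ρ (fun Y => ∏ i : Fin (N + 1), φ i (Y i))
      = chainExp (arStep d w m ρ) (leafW d w ρ) N φ := by
  simp only [arExp, arWeight, dif_pos N.succ_pos]
  rfl

lemma chainExp_leafW_blockTest (hd : 2 ≤ d) (hm : 1 ≤ m) (hρ : ρ ∈ Set.Icc (-1 : ℝ) 1)
    {a b c N : ℕ} (hab : a < b) (hbc : b < c) (hcN : c ≤ N) :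
    chainExp (arStep d w m ρ) (leafW d w ρ) N (blockTest d w a b c)
      = alphaAR d m ρ ^ 2 * (alphaAR d m ρ * qIsing d w ρ) ^ (c - a - 2)
          * ((d : ℝ) * ρ) ^ (2 * w) * postMeanBlockMoment d w ρ := by
  have hac := hab.trans hbc
  -- With `β = (dρ)^w` and `γ = postMeanBlockMoment`, the coefficients move by `(1, 0) ↦ (0, αβ)`
  -- at `a`, `(0, v) ↦ (0, αγv)` at `b` and `(0, v) ↦ (βv, 0)` at `c`, while every block in
  -- between multiplies the second coefficient by `αq`.
  rw [← mixW_one_zero, show N = N - a - 1 + a + 1 by omega,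
    chainExp_mixW_of_eq_one_succ hd hm hρ (φ := blockTest d w a b c)
      (fun i hi => blockTest_of_ne (by omega) (by omega) (by omega)),
    blockTest_of_eq_left rfl, mul_zero, mixStep_blockSum hρ,
    show N - a - 1 = N - b - 1 + (b - a - 1) + 1 by omega,
    chainExp_mixW_of_eq_one_succ hd hm hρ (φ := fun i => blockTest d w a b c (i + a + 1))
      (fun i hi => blockTest_of_ne (by omega) (by omega) (by omega)),
    blockTest_of_eq_mid (by omega) hab, mixStep_blockSum_sq,
    show N - b - 1 = N - c + (c - b - 1) by omega,
    chainExp_mixW_of_eq_one hd hm hρ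
      (φ := fun i => blockTest d w a b c (i + (b - a - 1) + 1 + a + 1))
      (fun i hi => blockTest_of_ne (by omega) (by omega) (by omega)),
    chainExp_mixW_of_pos_eq_one hd hm hρ
      (fun i hi hi' => blockTest_of_ne (by omega) (by omega) (by omega)),
    blockTest_of_eq_right (by omega) hac hbc, mixStep_blockSum hρ,
    show c - a - 2 = (c - b - 1) + (b - a - 1) by omega, pow_add]
  ring

end Evaluation

section Bounds

variable {d w : ℕ} {ρ : ℝ} (hρ : ρ ∈ Set.Icc (-1 : ℝ) 1)
include hρ

lemma qIsing_nonneg : 0 ≤ qIsing d w ρ :=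
  Finset.sum_nonneg fun y _ => mul_nonneg (leafW_nonneg hρ y) (sq_nonneg _)

lemma postMeanBlockMoment_nonneg : 0 ≤ postMeanBlockMoment d w ρ :=
  Finset.sum_nonneg fun y _ =>
    mul_nonneg (leafW_nonneg hρ y) (mul_nonneg (sq_nonneg _) (sq_nonneg _))

lemma postMeanBlockMoment_le_isingMoment : postMeanBlockMoment d w ρ ≤ isingMoment d w ρ 2 := by
  rw [← leafExp_blockSum_sq]
  refine Finset.sum_le_sum fun y _ => mul_le_mul_of_nonneg_left ?_ (leafW_nonneg hρ y)
  exact mul_le_of_le_one_left (sq_nonneg _) (rootPostMean_sq_le_one hρ y)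

end Bounds

lemma arExp_blockSum_mul_sq_mul {d w m : ℕ} {ρ : ℝ} (hd : 2 ≤ d) (hm : 1 ≤ m)
    (hρ : ρ ∈ Set.Icc (-1 : ℝ) 1) {n : ℕ} {a b c : Fin n} (hab : a < b) (hbc : b < c) :
    arExp d w m n ρ (fun Y => blockSum d w (Y a) * blockSum d w (Y b) ^ 2 * blockSum d w (Y c))
      = alphaAR d m ρ ^ 2 * (alphaAR d m ρ * qIsing d w ρ) ^ (c.val - a.val - 2)
          * ((d : ℝ) * ρ) ^ (2 * w) * postMeanBlockMoment d w ρ := by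
  obtain ⟨N, rfl⟩ : ∃ N, n = N + 1 := ⟨n - 1, by have := c.isLt; omega⟩
  simp_rw [← prod_blockTest hab hbc]
  rw [arExp_prod_eq_chainExp, chainExp_leafW_blockTest hd hm hρ hab hbc (by omega)]

end

theorem statement15_general (d h w : ℕ) (hd : 2 ≤ d) (ρ : ℝ)
    (hρ : ρ ∈ Set.Icc (0 : ℝ) 1) :
    ∀ a b c : Fin (d ^ (h - w)), a < b → b < c →
      0 ≤ arExp d w (h - w) (d ^ (h - w)) ρ
          (fun Y => blockSum d w (Y a) * blockSum d w (Y b) ^ 2 * blockSum d w (Y c)) ∧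
      arExp d w (h - w) (d ^ (h - w)) ρ
          (fun Y => blockSum d w (Y a) * blockSum d w (Y b) ^ 2 * blockSum d w (Y c)) ≤
        alphaAR d (h - w) ρ ^ 2 *
          (alphaAR d (h - w) ρ * qIsing d w ρ) ^ ((c.val - b.val) + (b.val - a.val) - 2) *
          ((d : ℝ) * ρ) ^ (2 * w) * isingMoment d w ρ 2 := by
  intro a b c hab hbc
  have hρ' : ρ ∈ Set.Icc (-1 : ℝ) 1 := ⟨by linarith [hρ.1], hρ.2⟩
  have hm : 1 ≤ h - w := by
    by_contra h₀
    have hc : c.val < d ^ (h - w) := c.isLt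
    have hac : a.val < c.val := hab.trans hbc
    have hone : d ^ (h - w) = 1 := by rw [show h - w = 0 by omega, pow_zero]
    omega
  have hC : 0 ≤ alphaAR d (h - w) ρ ^ 2
      * (alphaAR d (h - w) ρ * qIsing d w ρ) ^ (c.val - a.val - 2) * ((d : ℝ) * ρ) ^ (2 * w) :=
    mul_nonneg (mul_nonneg (sq_nonneg _)
      (pow_nonneg (mul_nonneg (alphaAR_nonneg hd ρ) (qIsing_nonneg hρ')) _))
      (by rw [pow_mul]; positivity)
  rw [arExp_blockSum_mul_sq_mul hd hm hρ' hab hbc,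
    show c.val - b.val + (b.val - a.val) - 2 = c.val - a.val - 2 by omega]
  exact ⟨mul_nonneg hC (postMeanBlockMoment_nonneg hρ'),
    mul_le_mul_of_nonneg_left (postMeanBlockMoment_le_isingMoment hρ') hC⟩

/-- In the autoregressive Ising broadcast process with context depth `w`
on `T(d,h)`, for `a < b < c` the block sums satisfy
`0 ≤ E[Z_a Z_b² Z_c] ≤ α² (α q_w)^{(c-b)+(b-a)-2} (dρ)^{2w} M_{d,ρ,w}(2)`. -/
theorem statement15 (d h w : ℕ) (hd : 2 ≤ d) (hw : w ≤ h) (ρ : ℝ)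
    (hρ : ρ ∈ Set.Icc (0 : ℝ) 1) :
    ∀ a b c : Fin (d ^ (h - w)), a < b → b < c →
      0 ≤ arExp d w (h - w) (d ^ (h - w)) ρ
          (fun Y => blockSum d w (Y a) * blockSum d w (Y b) ^ 2 * blockSum d w (Y c)) ∧
      arExp d w (h - w) (d ^ (h - w)) ρ
          (fun Y => blockSum d w (Y a) * blockSum d w (Y b) ^ 2 * blockSum d w (Y c)) ≤
        alphaAR d (h - w) ρ ^ 2 *
          (alphaAR d (h - w) ρ * qIsing d w ρ) ^ ((c.val - b.val) + (b.val - a.val) - 2) *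
          ((d : ℝ) * ρ) ^ (2 * w) * isingMoment d w ρ 2 :=
  statement15_general d h w hd ρ hρ
end
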